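/- arXiv:1610.10023 — 8 statements merged into one kernel-verified Lean document; each statement's English description precedes it below -/
import Mathlib

section
/- Theorem 2.3 (first equivalence): A ring extension R ⊆ S is quasi-Prüfer if and only if R ⊆ S is an INC-pair. -/
set_option maxHeartbeats 1000000
set_option synthInstance.maxHeartbeats 400000

open Polynomial

/-- A ring extension `R ⊆ S` (given by an injective algebra map) is *Prüfer* if every
intermediate ring `T ∈ [R,S]` is integrally closed in `S`, i.e. `R ⊆ S` is a normal pair. -/
def IsPruferExtension (R S : Type*) [CommRing R] [CommRing S] [Algebra R S] : Prop :=
  ∀ T : Subalgebra R S, ∀ x : S, IsIntegral T x → x ∈ T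

/-- A ring extension `R ⊆ S` is *quasi-Prüfer* if the integral closure `\overline{R}` of `R`
in `S` is such that `\overline{R} ⊆ S` is Prüfer, i.e. every intermediate ring of
`[\overline{R}, S]` is integrally closed in `S`. -/
def IsQuasiPruferExtension (R S : Type*) [CommRing R] [CommRing S] [Algebra R S] : Prop :=
  ∀ T : Subalgebra R S, integralClosure R S ≤ T → ∀ x : S, IsIntegral T x → x ∈ T

section Aux

variable {R S : Type*} [CommRing R] [CommRing S] [Algebra R S]

/-- Incomparability for integral extensions: comparable primes with the same contraction
are equal. -/
theorem eq_of_le_of_comap_eq_aux {A B : Type*} [CommRing A] [CommRing B] [Algebra A B]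
    [Algebra.IsIntegral A B] (P₁ P₂ : Ideal B) (h1 : P₁.IsPrime) (_h2 : P₂.IsPrime)
    (hle : P₁ ≤ P₂) (hc : P₁.comap (algebraMap A B) = P₂.comap (algebraMap A B)) :
    P₁ = P₂ := by
  by_contra hne
  have hlt : P₁ < P₂ := lt_of_le_of_ne hle hne
  obtain ⟨-, z, hz2, hz1⟩ := SetLike.lt_iff_le_and_exists.mp hlt
  have := Ideal.comap_lt_comap_of_integral_mem_sdiff (I := P₁) (J := P₂) hle ⟨hz2, hz1⟩
      (Algebra.IsIntegral.isIntegral (R := A) z)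
  rw [hc] at this
  exact lt_irrefl _ this

/-- If every polynomial over the integral closure vanishing at `x` has all of its coefficients
in a prime `P` of the integral closure, then the INC property fails. -/
theorem inc_violation
    (hinc : ∀ T : Subalgebra R S, ∀ Q Q' : Ideal T, Q.IsPrime → Q'.IsPrime → Q ≤ Q' →
        Q.comap (algebraMap R T) = Q'.comap (algebraMap R T) → Q = Q')
    (x : S) (P : Ideal ↥(integralClosure R S)) (hP : P.IsPrime)
    (hker : ∀ f : Polynomial ↥(integralClosure R S), aeval x f = 0 → ∀ i, f.coeff i ∈ P) :
    False := by
  haveI := hP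
  set D₀ := ↥(integralClosure R S) with hD₀
  -- the subalgebra generated by the integral closure and `x`, as an `R`-subalgebra of `S`
  set T'' : Subalgebra R S := (Algebra.adjoin D₀ {x}).restrictScalars R with hT''
  have hmemT'' : ∀ y : S, y ∈ T'' ↔ ∃ p : Polynomial D₀, aeval x p = y := by
    intro y
    rw [hT'', Subalgebra.mem_restrictScalars, Algebra.adjoin_singleton_eq_range_aeval]
    exact Iff.rfl
  have hmem : ∀ p : Polynomial D₀, aeval x p ∈ T'' := fun p => (hmemT'' _).mpr ⟨p, rfl⟩
  -- the surjection from the polynomial ring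
  set σ : Polynomial D₀ →+* ↥T'' :=
    RingHom.codRestrict ((Polynomial.aeval x : Polynomial D₀ →ₐ[D₀] S) :
      Polynomial D₀ →+* S) T'' hmem with hσdef
  have hσval : ∀ p : Polynomial D₀, (σ p : S) = aeval x p := fun p => rfl
  have hσsurj : Function.Surjective σ := by
    rintro ⟨g, hg⟩
    obtain ⟨p, hp⟩ := (hmemT'' g).mp hg
    exact ⟨p, Subtype.ext hp⟩
  -- two primes of the polynomial ring
  set φ₁ : Polynomial D₀ →+* Polynomial (D₀ ⧸ P) := mapRingHom (Ideal.Quotient.mk P) with hφ₁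
  set φ₂ : Polynomial D₀ →+* (D₀ ⧸ P) := (Ideal.Quotient.mk P).comp constantCoeff with hφ₂
  set Λ₁ : Ideal (Polynomial D₀) := RingHom.ker φ₁ with hΛ₁
  set Λ₂ : Ideal (Polynomial D₀) := RingHom.ker φ₂ with hΛ₂
  have hΛ₁p : Λ₁.IsPrime := RingHom.ker_isPrime φ₁
  have hΛ₂p : Λ₂.IsPrime := RingHom.ker_isPrime φ₂
  have hmemΛ₁ : ∀ p : Polynomial D₀, p ∈ Λ₁ ↔ ∀ i, p.coeff i ∈ P := by
    intro p
    constructor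
    · intro hp i
      have : (φ₁ p).coeff i = 0 := by rw [show φ₁ p = 0 from hp]; simp
      rwa [hφ₁, coe_mapRingHom, coeff_map, Ideal.Quotient.eq_zero_iff_mem] at this
    · intro h
      show φ₁ p = 0
      ext i
      rw [hφ₁]
      simp only [coe_mapRingHom, coeff_map, coeff_zero, Ideal.Quotient.eq_zero_iff_mem]
      exact h i
  have hmemΛ₂ : ∀ p : Polynomial D₀, p ∈ Λ₂ ↔ p.coeff 0 ∈ P := by
    intro p
    show φ₂ p = 0 ↔ _
    rw [hφ₂, RingHom.comp_apply, constantCoeff_apply, Ideal.Quotient.eq_zero_iff_mem]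
  have hΛle : Λ₁ ≤ Λ₂ := by
    intro p hp
    rw [hmemΛ₂]
    exact (hmemΛ₁ p).mp hp 0
  have hkerσ : RingHom.ker σ ≤ Λ₁ := by
    intro p hp
    have hp0 : aeval x p = 0 := by
      have : (σ p : S) = ((0 : ↥T'') : S) := by rw [show σ p = 0 from hp]
      simpa [hσval] using this
    exact (hmemΛ₁ p).mpr (hker p hp0)
  -- their images
  set J₁ : Ideal ↥T'' := Λ₁.map σ with hJ₁
  set J₂ : Ideal ↥T'' := Λ₂.map σ with hJ₂
  have hJ₁p : J₁.IsPrime := Ideal.map_isPrime_of_surjective hσsurj hkerσ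
  have hJ₂p : J₂.IsPrime := Ideal.map_isPrime_of_surjective hσsurj (le_trans hkerσ hΛle)
  have hJle : J₁ ≤ J₂ := Ideal.map_mono hΛle
  have hmemJ : ∀ (Λ : Ideal (Polynomial D₀)), Λ₁ ≤ Λ → ∀ p : Polynomial D₀,
      (σ p ∈ Λ.map σ ↔ p ∈ Λ) := by
    intro Λ hΛ p
    constructor
    · intro hσp
      obtain ⟨q, hq, hqp⟩ := Ideal.mem_map_iff_of_surjective _ hσsurj |>.mp hσp
      have hker' : p - q ∈ RingHom.ker σ := by
        show σ (p - q) = 0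
        rw [RingHom.map_sub, hqp, sub_self]
      have : p - q ∈ Λ := hΛ (hkerσ hker')
      simpa using add_mem this hq
    · intro hp
      exact Ideal.mem_map_of_mem _ hp
  have happly : ∀ r : R, algebraMap R ↥T'' r = σ (C (algebraMap R D₀ r)) := by
    intro r
    apply Subtype.ext
    show algebraMap R S r = (σ (C (algebraMap R D₀ r)) : S)
    rw [hσval, aeval_C]
    exact IsScalarTower.algebraMap_apply R D₀ S r
  have hcomapeq : J₁.comap (algebraMap R ↥T'') = J₂.comap (algebraMap R ↥T'') := by
    ext r
    rw [Ideal.mem_comap, Ideal.mem_comap, happly r, hJ₁, hJ₂, hmemJ Λ₁ le_rfl,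
      hmemJ Λ₂ hΛle]
    rw [hmemΛ₁, hmemΛ₂, coeff_C_zero]
    constructor
    · intro h
      simpa using h 0
    · intro h i
      rcases eq_or_ne i 0 with rfl | hi
      · simpa using h
      · simp [coeff_C, hi]
  have hQeq := hinc T'' J₁ J₂ hJ₁p hJ₂p hJle hcomapeq
  -- but `σ X ∈ J₂ \ J₁`
  have hX2 : σ X ∈ J₂ := by
    rw [hJ₂, hmemJ Λ₂ hΛle, hmemΛ₂, coeff_X_zero]
    exact P.zero_mem
  have hX1 : σ X ∉ J₁ := by
    rw [hJ₁, hmemJ Λ₁ le_rfl, hmemΛ₁]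
    intro hX
    have := hX 1
    rw [coeff_X_one] at this
    exact hP.ne_top (Ideal.eq_top_of_isUnit_mem P this isUnit_one)
  rw [← hQeq] at hX2
  exact hX1 hX2

/-- The degree-reduction machine: if `x` is integral over `T ⊇ \overline{R}`, `M` is a maximal
ideal of `T` containing the conductor of `x`, then every polynomial over the integral closure
vanishing at `x` has all its coefficients in `M ∩ \overline{R}`. -/
theorem machine {T : Subalgebra R S} (hT : integralClosure R S ≤ T)
    {x : S} (hx : IsIntegral (↥T) x) {M : Ideal ↥T} (hM : M.IsMaximal)
    (hcond : ∀ t : ↥T, (t : S) * x ∈ T → t ∈ M) :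
    ∀ f : Polynomial ↥(integralClosure R S), aeval x f = 0 →
      ∀ i, f.coeff i ∈ Ideal.comap (Subalgebra.inclusion hT) M := by
  set D₀ := ↥(integralClosure R S) with hD₀
  set P : Ideal D₀ := Ideal.comap (Subalgebra.inclusion hT) M with hPdef
  have hmemP : ∀ d : D₀, d ∈ P ↔ Subalgebra.inclusion hT d ∈ M := fun d => Iff.rfl
  have hinj : ∀ c : D₀, algebraMap D₀ S c = 0 → c = 0 := fun c hc => Subtype.ext hc
  -- `T` is nontrivial
  have hone : (1 : S) ≠ 0 := by
    intro h10
    have h1T : (1 : ↥T) = 0 := Subtype.ext (by simpa using h10)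
    exact hM.ne_top (Ideal.eq_top_iff_one M |>.mpr (h1T ▸ M.zero_mem))
  by_contra hcontra
  push_neg at hcontra
  obtain ⟨f₀, hf₀, i₀, hi₀⟩ := hcontra
  -- strong induction on the degree
  suffices H : ∀ d : ℕ, ∀ f : Polynomial D₀, f.natDegree ≤ d → aeval x f = 0 →
      ∀ i, f.coeff i ∉ P → False by
    exact H f₀.natDegree f₀ le_rfl hf₀ i₀ hi₀
  intro d
  induction d with
  | zero =>
    intro f hdeg hfx i hi
    have hfC : f = C (f.coeff 0) := eq_C_of_natDegree_le_zero hdeg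
    have hi0 : i = 0 := by
      by_contra hne
      apply hi
      have hz : f.coeff i = 0 := by rw [hfC, coeff_C]; simp [hne]
      rw [hz]; exact P.zero_mem
    subst hi0
    have hc0 : algebraMap D₀ S (f.coeff 0) = 0 := by
      rw [← aeval_C x (f.coeff 0), ← hfC]; exact hfx
    rw [hinj _ hc0] at hi
    exact hi P.zero_mem
  | succ d ih =>
    intro f hdeg hfx i hi
    rcases Nat.lt_or_ge f.natDegree (d + 1) with hlt | hge
    · exact ih f (Nat.lt_succ_iff.mp hlt) hfx i hi
    have hdeg' : f.natDegree = d + 1 := le_antisymm hdeg hge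
    have hf0 : f ≠ 0 := by
      intro h0
      apply hi
      rw [h0]; simpa using P.zero_mem
    set lam : D₀ := f.leadingCoeff with hlam
    -- `λ·x` is integral over the integral closure, hence lies in it
    have hyint : IsIntegral D₀ (algebraMap D₀ S lam * x) :=
      ⟨integralNormalization f, monic_integralNormalization hf0,
        integralNormalization_aeval_eq_zero hfx hinj⟩
    have hyR : IsIntegral R (algebraMap D₀ S lam * x) :=
      isIntegral_trans (R := R) (A := D₀) _ hyint
    have hlamval : algebraMap D₀ S lam = (lam : S) := rfl
    have hymem : (lam : S) * x ∈ integralClosure R S := by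
      rw [← hlamval]; exact hyR
    set y : D₀ := ⟨(lam : S) * x, hymem⟩ with hy
    have hyval : algebraMap D₀ S y = (lam : S) * x := rfl
    by_cases hlamP : lam ∈ P
    · by_cases hyP : y ∈ P
      · -- fold the leading coefficient and recurse
        set f₂ : Polynomial D₀ := f.eraseLead + C y * X ^ d with hf₂def
        have hf₂x : aeval x f₂ = 0 := by
          have hsplit : f.eraseLead + C lam * X ^ (d + 1) = f := by
            rw [hlam, ← hdeg']; exact f.eraseLead_add_C_mul_X_pow
          have heval : aeval x f.eraseLead + (lam : S) * x ^ (d + 1) = 0 := by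
            have h := congrArg (aeval x) hsplit
            rw [map_add, hfx, map_mul, aeval_C, map_pow, aeval_X, hlamval] at h
            exact h
          rw [hf₂def, map_add, map_mul, aeval_C, map_pow, aeval_X, hyval]
          have hxp : (lam : S) * x * x ^ d = (lam : S) * x ^ (d + 1) := by
            rw [pow_succ]; ring
          rw [hxp]
          exact heval
        have hf₂deg : f₂.natDegree ≤ d := by
          apply le_trans (natDegree_add_le _ _)
          apply max_le
          · exact le_trans f.eraseLead_natDegree_le (by omega)
          · exact natDegree_C_mul_X_pow_le y d
        have hile : i ≤ d := by
          have h1 : i ≤ f.natDegree := by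
            by_contra hgt
            push_neg at hgt
            apply hi
            rw [coeff_eq_zero_of_natDegree_lt hgt]
            exact P.zero_mem
          have hne : i ≠ f.natDegree := by
            intro heq
            apply hi
            rw [heq]
            exact hlamP
          omega
        have hi₂ : f₂.coeff i ∉ P := by
          rw [hf₂def, coeff_add, f.eraseLead_coeff_of_ne i (by omega), coeff_C_mul, coeff_X_pow]
          rcases eq_or_ne i d with rfl | hne
          · rw [if_pos rfl, mul_one]
            intro hmem
            exact hi (by simpa using (Ideal.sub_mem P hmem hyP))
          · rw [if_neg hne, mul_zero, add_zero]
            exact hi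
        exact ih f₂ hf₂deg hf₂x i hi₂
      · -- final kill: `y = λ·x ∈ \overline{R} \setminus P`
        obtain ⟨p, pmonic, hpx'⟩ := hx
        have hpx : aeval x p = 0 := by rwa [Polynomial.aeval_def]
        clear hpx'
        set n := p.natDegree with hn
        have hn1 : 1 ≤ n := by
          by_contra h0
          push_neg at h0
          have hn0 : n = 0 := by omega
          have hp1 : p = 1 := pmonic.natDegree_eq_zero.mp hn0
          rw [hp1, map_one] at hpx
          exact hone hpx
        have hcn : p.coeff n = 1 := pmonic.coeff_natDegree
        have hsum : ∑ j ∈ Finset.range (n + 1), ((p.coeff j : S) * x ^ j) = 0 := by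
          have h := aeval_eq_sum_range (R := ↥T) (p := p) x
          rw [hpx] at h
          have h2 : ∀ j ∈ Finset.range (n + 1), (p.coeff j) • x ^ j = (p.coeff j : S) * x ^ j :=
            fun j _ => rfl
          calc ∑ j ∈ Finset.range (n + 1), ((p.coeff j : S) * x ^ j)
              = ∑ j ∈ Finset.range (n + 1), (p.coeff j) • x ^ j :=
                (Finset.sum_congr rfl h2).symm
            _ = 0 := h.symm
        have hkey : ((lam : S) * x) ^ n
            + ∑ j ∈ Finset.range n,
                ((p.coeff j : S) * ((lam : S) ^ (n - j) * ((lam : S) * x) ^ j)) = 0 := by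
          have h3 : ∑ j ∈ Finset.range (n + 1), ((lam : S) ^ n * ((p.coeff j : S) * x ^ j))
              = 0 := by
            rw [← Finset.mul_sum, hsum, mul_zero]
          have h4 : ∀ j ∈ Finset.range (n + 1), (lam : S) ^ n * ((p.coeff j : S) * x ^ j)
              = (p.coeff j : S) * ((lam : S) ^ (n - j) * ((lam : S) * x) ^ j) := by
            intro j hj
            have hjn : j ≤ n := Nat.lt_succ_iff.mp (Finset.mem_range.mp hj)
            have hpow : (lam : S) ^ n = (lam : S) ^ (n - j) * (lam : S) ^ j := by
              rw [← pow_add]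
              congr 1
              omega
            rw [hpow, mul_pow]
            ring
          rw [Finset.sum_congr rfl h4, Finset.sum_range_succ, hcn] at h3
          rw [Nat.sub_self, pow_zero, one_mul] at h3
          have hone' : ((1 : ↥T) : S) = 1 := rfl
          rw [hone', one_mul] at h3
          linear_combination h3
        -- push the identity into `T`
        set lamT : ↥T := Subalgebra.inclusion hT lam with hlamT
        set vT : ↥T := Subalgebra.inclusion hT y with hvT
        have hvTval : (vT : S) = (lam : S) * x := by rw [hvT, Subalgebra.coe_inclusion]
        have hlamTval : (lamT : S) = (lam : S) := by rw [hlamT, Subalgebra.coe_inclusion]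
        have hTkey : vT ^ n
            + ∑ j ∈ Finset.range n, (p.coeff j * (lamT ^ (n - j) * vT ^ j)) = 0 := by
          apply Subtype.ext
          have hcast : ((vT ^ n
              + ∑ j ∈ Finset.range n, (p.coeff j * (lamT ^ (n - j) * vT ^ j)) : ↥T) : S)
              = ((vT : S)) ^ n + ∑ j ∈ Finset.range n,
                ((p.coeff j : S) * (((lamT : S)) ^ (n - j) * ((vT : S)) ^ j)) := by
            push_cast
            rfl
          rw [hcast, hvTval, hlamTval]
          exact hkey
        have hsummem : ∑ j ∈ Finset.range n, (p.coeff j * (lamT ^ (n - j) * vT ^ j)) ∈ M := by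
          apply Ideal.sum_mem
          intro j hj
          have hjn : j < n := Finset.mem_range.mp hj
          have hlampow : lamT ^ (n - j) ∈ M := by
            have hk : n - j = (n - j - 1) + 1 := by omega
            rw [hk, pow_succ]
            exact M.mul_mem_left _ ((hmemP lam).mp hlamP)
          exact M.mul_mem_left _ (M.mul_mem_right _ hlampow)
        have hvTn : vT ^ n ∈ M := by
          have heq : vT ^ n
              = - ∑ j ∈ Finset.range n, (p.coeff j * (lamT ^ (n - j) * vT ^ j)) := by
            linear_combination hTkey
          rw [heq]
          exact M.neg_mem hsummem
        have hvTM : vT ∈ M := hM.isPrime.mem_of_pow_mem n hvTn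
        exact hyP ((hmemP y).mpr hvTM)
    · -- the leading coefficient is not in `P`: contradicts that the conductor is inside `M`
      have hmemT : (Subalgebra.inclusion hT lam : S) * x ∈ T := by
        rw [Subalgebra.coe_inclusion]
        exact hT hymem
      exact hlamP ((hmemP lam).mpr (hcond (Subalgebra.inclusion hT lam) hmemT))

/-- INC-pair implies quasi-Prüfer. -/
theorem backward_qp
    (hinc : ∀ T : Subalgebra R S, ∀ Q Q' : Ideal T, Q.IsPrime → Q'.IsPrime → Q ≤ Q' →
        Q.comap (algebraMap R T) = Q'.comap (algebraMap R T) → Q = Q') :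
    IsQuasiPruferExtension R S := by
  intro T hT x hx
  -- the conductor ideal of `x` into `T`
  set c : Ideal ↥T :=
    { carrier := {t : ↥T | (t : S) * x ∈ T}
      add_mem' := by
        intro a b ha hb
        show ((a + b : ↥T) : S) * x ∈ T
        have : ((a + b : ↥T) : S) * x = (a : S) * x + (b : S) * x := by
          push_cast
          ring
        rw [this]
        exact T.add_mem ha hb
      zero_mem' := by
        show ((0 : ↥T) : S) * x ∈ T
        have : ((0 : ↥T) : S) * x = 0 := by push_cast; ring
        rw [this]
        exact T.zero_mem
      smul_mem' := by
        intro r t ht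
        show ((r • t : ↥T) : S) * x ∈ T
        have hrt : (r • t : ↥T) = r * t := rfl
        have : ((r • t : ↥T) : S) * x = (r : S) * ((t : S) * x) := by
          rw [hrt]
          push_cast
          ring
        rw [this]
        exact T.mul_mem r.2 ht } with hc
  by_cases hctop : c = ⊤
  · have h1 : (1 : ↥T) ∈ c := hctop ▸ Submodule.mem_top
    have h1' : ((1 : ↥T) : S) * x ∈ T := h1
    simpa using h1'
  · exfalso
    obtain ⟨M, hM, hcM⟩ := Ideal.exists_le_maximal c hctop
    have hcond : ∀ t : ↥T, (t : S) * x ∈ T → t ∈ M := fun t ht => hcM ht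
    by_cases hV : ∀ f : Polynomial ↥(integralClosure R S), aeval x f = 0 →
        ∀ i, f.coeff i ∈ Ideal.comap (Subalgebra.inclusion hT) M
    · haveI := hM.isPrime
      exact inc_violation hinc x (Ideal.comap (Subalgebra.inclusion hT) M)
        (Ideal.IsPrime.comap _) hV
    · exact hV (machine hT hx hM hcond)

/-- Quasi-Prüfer implies INC-pair. -/
theorem forward_qp (hqp : IsQuasiPruferExtension R S) :
    ∀ T : Subalgebra R S, ∀ Q Q' : Ideal T, Q.IsPrime → Q'.IsPrime → Q ≤ Q' →
      Q.comap (algebraMap R T) = Q'.comap (algebraMap R T) → Q = Q' := by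
  intro T Q Q' hQ hQ' hle hcomap
  haveI := hQ
  haveI := hQ'
  set DD := integralClosure R S with hDD
  set D₀ := ↥DD with hD₀
  set T' : Subalgebra R S := T ⊔ DD with hT'
  have hTT' : T ≤ T' := le_sup_left
  have hDT' : DD ≤ T' := le_sup_right
  letI : Algebra ↥T ↥T' := (Subalgebra.inclusion hTT').toRingHom.toAlgebra
  have halgmap : ∀ t : ↥T, algebraMap ↥T ↥T' t = Subalgebra.inclusion hTT' t := fun t => rfl
  -- `T ⊆ T'` is an integral extension
  haveI hTT'int : Algebra.IsIntegral ↥T ↥T' := by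
    constructor
    intro z
    have hzS : IsIntegral ↥T (z : S) := by
      have hz' : (z : S) ∈ T ⊔ DD := z.2
      have hsub : T ⊔ DD ≤ (integralClosure ↥T S).restrictScalars R := by
        apply sup_le
        · intro t ht
          rw [Subalgebra.mem_restrictScalars]
          refine ⟨X - C (⟨t, ht⟩ : ↥T), monic_X_sub_C _, ?_⟩
          have hco : (algebraMap (↥T) S) (⟨t, ht⟩ : ↥T) = t := rfl
          simp [hco]
        · intro dd hdd
          rw [Subalgebra.mem_restrictScalars]
          exact IsIntegral.tower_top (show IsIntegral R dd from hdd)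
      have hmem := hsub hz'
      rwa [Subalgebra.mem_restrictScalars] at hmem
    let ν : ↥T' →ₐ[↥T] S :=
      { toRingHom := (T'.val : ↥T' →ₐ[R] S).toRingHom
        commutes' := fun t => rfl }
    have hνinj : Function.Injective ν := Subtype.val_injective
    exact (isIntegral_algHom_iff ν hνinj).mp hzS
  -- lying over and going up
  have hker : Ideal.comap (algebraMap ↥T ↥T') ⊥ ≤ Q := by
    intro a ha
    rw [Ideal.mem_comap, Ideal.mem_bot] at ha
    have ha0 : a = 0 := by
      apply Subalgebra.inclusion_injective hTT'
      rw [← halgmap a, ha]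
      rfl
    rw [ha0]
    exact Q.zero_mem
  obtain ⟨q, -, hqprime, hqcomap⟩ := Ideal.exists_ideal_over_prime_of_isIntegral Q ⊥ hker
  haveI := hqprime
  obtain ⟨q', hqq', hq'prime, hq'comap⟩ :=
    Ideal.exists_ideal_over_prime_of_isIntegral Q' q (by rw [hqcomap]; exact hle)
  haveI := hq'prime
  -- contract to the integral closure and use incomparability over `R`
  let ι : ↥DD →ₐ[R] ↥T' := Subalgebra.inclusion hDT'
  haveI hP₁p : (q.comap ι).IsPrime := Ideal.IsPrime.comap _
  haveI hP₂p : (q'.comap ι).IsPrime := Ideal.IsPrime.comap _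
  have key : ∀ (J : Ideal ↥T') (QQ : Ideal ↥T), J.comap (algebraMap ↥T ↥T') = QQ →
      (J.comap ι).comap (algebraMap R ↥DD) = QQ.comap (algebraMap R ↥T) := by
    intro J QQ hJ
    ext r
    rw [Ideal.mem_comap, Ideal.mem_comap, Ideal.mem_comap]
    have e1 : ι (algebraMap R ↥DD r) = algebraMap ↥T ↥T' (algebraMap R ↥T r) :=
      Subtype.ext rfl
    rw [e1, ← hJ, Ideal.mem_comap]
  have hP₁₂ : q.comap ι = q'.comap ι := by
    haveI hDDint : Algebra.IsIntegral R ↥DD := integralClosure.AlgebraIsIntegral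
    apply eq_of_le_of_comap_eq_aux (A := R) (B := ↥DD) _ _ hP₁p hP₂p (Ideal.comap_mono hqq')
    · rw [key q Q hqcomap, key q' Q' hq'comap, hcomap]
  -- the squaring trick: `q' ≤ q`
  have hq'leq : q' ≤ q := by
    intro z hz
    have hsT' : (z : S) ∈ T' := z.2
    set s : S := (z : S) with hs
    set U : Subalgebra R S := (Algebra.adjoin D₀ {s * s}).restrictScalars R with hU
    have hDU : DD ≤ U := by
      intro dd hdd
      rw [hU, Subalgebra.mem_restrictScalars]
      exact Subalgebra.algebraMap_mem _ (⟨dd, hdd⟩ : D₀)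
    have hssU : s * s ∈ U := by
      rw [hU, Subalgebra.mem_restrictScalars]
      exact Algebra.subset_adjoin (Set.mem_singleton _)
    have hsint : IsIntegral ↥U s := by
      have heval : aeval s (X ^ 2 - C (⟨s * s, hssU⟩ : ↥U)) = 0 := by
        rw [map_sub, map_pow, aeval_X, aeval_C]
        have hcoe : (algebraMap ↥U S) (⟨s * s, hssU⟩ : ↥U) = s * s := rfl
        rw [hcoe, pow_two, sub_self]
      refine ⟨X ^ 2 - C (⟨s * s, hssU⟩ : ↥U), monic_X_pow_sub_C _ (by norm_num), ?_⟩
      rwa [Polynomial.aeval_def] at heval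
    have hsU : s ∈ U := hqp U hDU s hsint
    rw [hU, Subalgebra.mem_restrictScalars, Algebra.adjoin_singleton_eq_range_aeval] at hsU
    obtain ⟨pp, hpp⟩ := hsU
    set b : S := aeval (s * s) pp.divX with hb
    have hdecomp : (s * s) * b + algebraMap D₀ S (pp.coeff 0) = s := by
      have h := congrArg (aeval (s * s)) (X_mul_divX_add pp)
      rw [map_add, map_mul, aeval_X, aeval_C] at h
      rw [← hb] at h
      rw [h]
      exact hpp
    -- `b` lies in `T'`
    have hbT' : b ∈ T' := by
      let T'D : Subalgebra D₀ S :=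
        { T'.toSubsemiring with algebraMap_mem' := fun dd => hDT' dd.2 }
      have hadj : Algebra.adjoin D₀ {s * s} ≤ T'D := by
        apply Algebra.adjoin_le
        intro w hw
        rw [Set.mem_singleton_iff] at hw
        subst hw
        exact T'.mul_mem hsT' hsT'
      have hbmem : b ∈ Algebra.adjoin D₀ {s * s} := by
        rw [Algebra.adjoin_singleton_eq_range_aeval]
        exact ⟨pp.divX, rfl⟩
      exact hadj hbmem
    set bT : ↥T' := ⟨b, hbT'⟩ with hbT
    set d₀T : ↥T' := ι (pp.coeff 0) with hd₀T
    have hzeq : z = z * z * bT + d₀T := by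
      apply Subtype.ext
      show s = ((z * z * bT + d₀T : ↥T') : S)
      have hL : ((z * z * bT + d₀T : ↥T') : S) = s * s * b + algebraMap D₀ S (pp.coeff 0) :=
        rfl
      rw [hL]
      linear_combination -hdecomp
    have hd₀q' : d₀T ∈ q' := by
      have hrw : d₀T = z - z * z * bT := by linear_combination -hzeq
      rw [hrw]
      exact Ideal.sub_mem q' hz (q'.mul_mem_right bT (q'.mul_mem_left z hz))
    have hP2mem : pp.coeff 0 ∈ q'.comap ι := hd₀q'
    have hP1mem : pp.coeff 0 ∈ q.comap ι := by rw [hP₁₂]; exact hP2mem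
    have hd₀q : d₀T ∈ q := hP1mem
    have hfactor : z * (1 - z * bT) = d₀T := by linear_combination hzeq
    rcases hqprime.mem_or_mem (hfactor ▸ hd₀q) with hz1 | hz2
    · exact hz1
    · exfalso
      have h1q' : (1 : ↥T') ∈ q' := by
        have hone : (1 : ↥T') = (1 - z * bT) + z * bT := by ring
        rw [hone]
        exact Ideal.add_mem q' (hqq' hz2) (q'.mul_mem_right bT hz)
      exact hq'prime.ne_top (Ideal.eq_top_iff_one q' |>.mpr h1q')
  have hqeq : q = q' := le_antisymm hqq' hq'leq
  rw [← hqcomap, ← hq'comap, hqeq]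

end Aux

/-- **Theorem 2.3 (first equivalence).** A ring extension `R ⊆ S` is quasi-Prüfer if and only
if `R ⊆ S` is an INC-pair: for each intermediate ring `T ∈ [R,S]` and primes `Q ⊆ Q'` of `T`
with `Q ∩ R = Q' ∩ R`, one has `Q = Q'`. -/
theorem isQuasiPruferExtension_iff_inc_pair {R S : Type*} [CommRing R] [CommRing S]
    [Algebra R S] (hinj : Function.Injective (algebraMap R S)) :
    IsQuasiPruferExtension R S ↔
      ∀ T : Subalgebra R S, ∀ Q Q' : Ideal T, Q.IsPrime → Q'.IsPrime → Q ≤ Q' →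
        Q.comap (algebraMap R T) = Q'.comap (algebraMap R T) → Q = Q' := by
  constructor
  · exact forward_qp
  · exact backward_qp
end

section
/- Theorem 2.3 (second equivalence): A ring extension R ⊆ S is quasi-Prüfer if and only if R ⊆ S is a residually algebraic pair. -/
/-!
Write `Ā` for the integral closure of `R` in `S`.

(⇒) If `Ā ⊆ S` is Prüfer, every `z ∈ S` lies in `Ā[z²]`, being a root of `X² - z²`; so
`z = P(z²)` with `P ∈ Ā[X]`. The polynomial `X - P(X²)` has linear coefficient `1` and
coefficients integral over `R`. For `z` in an intermediate ring `T` with a prime `Q`, reducing it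
modulo a prime of `T[Ā]` lying over `Q` shows that `z mod Q` is algebraic over `R/(Q ∩ R)`.

(⇐) Fix `x ∈ S` and let `J = (Ā :_Ā x)`. Every coefficient `aᵢ` of a relation `g(x) = 0` over
`Ā` lies in `J + Jx`: the tails `sᵢ = aᵢ + aᵢ₊₁x + ⋯` are integral over `Ā` and
`aᵢ = sᵢ - x sᵢ₊₁`. If `J + Jx` were proper, a prime `q ⊇ J + Jx` would give a well-defined
surjection `Ā[x] → (Ā/q)[X]`, `x ↦ X`, and `x` would be transcendental modulo its kernel,
contradicting residual algebraicity of `R ⊆ Ā[x]`. Hence `u + vx = 1` with `u, v ∈ J`, and this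
forces any `x` integral over a ring `T ⊇ Ā` to lie in `T`.
-/

open Polynomial

def IsResiduallyAlgebraic (R T : Type*) [CommRing R] [CommRing T] [Algebra R T] : Prop :=
  ∀ Q : Ideal T, Q.IsPrime → Algebra.IsAlgebraic (R ⧸ Q.comap (algebraMap R T)) (T ⧸ Q)

section ResidualAlgebraicity

variable {R T : Type*} [CommRing R] [CommRing T] [Algebra R T]

theorem isAlgebraic_quotient_mk_iff {Q : Ideal T} {t : T} :
    IsAlgebraic (R ⧸ Q.comap (algebraMap R T)) (Ideal.Quotient.mk Q t) ↔
      ∃ g : R[X], (∃ i, algebraMap R T (g.coeff i) ∉ Q) ∧ aeval t g ∈ Q := by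
  have aeval_mk (g : R[X]) :
      aeval (Ideal.Quotient.mk Q t) g = Ideal.Quotient.mk Q (aeval t g) :=
    aeval_algHom_apply (Ideal.Quotient.mkₐ R Q) t g
  constructor
  · rintro ⟨g, hg, hgt⟩
    obtain ⟨g, rfl⟩ := map_surjective (algebraMap R _) Ideal.Quotient.mk_surjective g
    obtain ⟨i, hi⟩ := not_forall.mp (Polynomial.ext_iff.not.mp hg)
    refine ⟨g, ⟨i, fun h => hi ?_⟩, ?_⟩
    · simpa [Ideal.Quotient.eq_zero_iff_mem] using h
    · rwa [aeval_map_algebraMap, aeval_mk, Ideal.Quotient.eq_zero_iff_mem] at hgt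
  · rintro ⟨g, ⟨i, hi⟩, hgt⟩
    refine ⟨g.map (algebraMap R _), fun h => hi ?_, ?_⟩
    · simpa [Ideal.Quotient.eq_zero_iff_mem] using congrArg (coeff · i) h
    · rwa [aeval_map_algebraMap, aeval_mk, Ideal.Quotient.eq_zero_iff_mem]

theorem isAlgebraic_quotient_mk_comap_of_isAlgebraic {U : Type*} [CommRing U] [Algebra R U]
    [Algebra T U] [IsScalarTower R T U] {Q : Ideal U} {t : T}
    (h : IsAlgebraic (R ⧸ Q.comap (algebraMap R U)) (Ideal.Quotient.mk Q (algebraMap T U t))) :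
    IsAlgebraic (R ⧸ (Q.comap (algebraMap T U)).comap (algebraMap R T))
      (Ideal.Quotient.mk (Q.comap (algebraMap T U)) t) := by
  obtain ⟨g, ⟨i, hi⟩, hgt⟩ := isAlgebraic_quotient_mk_iff.mp h
  refine isAlgebraic_quotient_mk_iff.mpr ⟨g, ⟨i, ?_⟩, ?_⟩
  · rwa [Ideal.mem_comap, ← IsScalarTower.algebraMap_apply]
  · rwa [Ideal.mem_comap, ← aeval_algebraMap_apply]

end ResidualAlgebraicity

section Tails

variable {A S : Type*} [CommRing A] [CommRing S] [Algebra A S]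

theorem isIntegral_of_mul_mem_span {s : Set S} (hs : s.Finite)
    (hmul : ∀ a ∈ s, ∀ b ∈ s, a * b ∈ Submodule.span A (insert 1 s)) {y : S} (hy : y ∈ s) :
    IsIntegral A y := by
  set W := Submodule.span A (insert 1 s)
  have hclosed (a b : S) (ha : a ∈ W) (hb : b ∈ W) : a * b ∈ W := by
    have hle : W * W ≤ W := by
      rw [Submodule.span_mul_span, Submodule.span_le]
      rintro _ ⟨a, ha, b, hb, rfl⟩
      rcases ha with rfl | ha
      · simpa using Submodule.subset_span hb
      rcases hb with rfl | hb
      · simpa using Submodule.subset_span (Set.mem_insert_of_mem _ ha)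
      exact hmul a ha b hb
    exact hle (Submodule.mul_mem_mul ha hb)
  exact IsIntegral.of_mem_of_fg
    (W.toSubalgebra (Submodule.subset_span (Set.mem_insert _ _)) hclosed)
    (Submodule.fg_span (hs.insert 1)) _ (Submodule.subset_span (Set.mem_insert_of_mem _ hy))

namespace Polynomial

theorem coeff_divX_iterate (g : A[X]) (i n : ℕ) : (divX^[i] g).coeff n = g.coeff (n + i) := by
  induction i generalizing n with
  | zero => rfl
  | succ i ih => rw [Function.iterate_succ_apply', coeff_divX, ih, add_right_comm, add_assoc]

theorem divX_iterate_eq_zero {g : A[X]} {i : ℕ} (hi : g.natDegree < i) : divX^[i] g = 0 := by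
  ext n
  rw [coeff_divX_iterate, coeff_zero, coeff_eq_zero_of_natDegree_lt (by omega)]

theorem aeval_divX_iterate (x : S) (g : A[X]) (i : ℕ) :
    aeval x (divX^[i] g) = algebraMap A S (g.coeff i) + x * aeval x (divX^[i + 1] g) := by
  conv_lhs => rw [← divX_mul_X_add (divX^[i] g)]
  rw [Function.iterate_succ_apply', coeff_divX_iterate, zero_add]
  simp only [map_add, map_mul, aeval_X, aeval_C]
  ring

variable {x : S} {g : A[X]}

theorem isIntegral_aeval_divX_iterate (hg : aeval x g = 0) (i : ℕ) :
    IsIntegral A (aeval x (divX^[i] g)) := by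
  set s : ℕ → S := fun i => aeval x (divX^[i] g)
  have hs_mem (i : ℕ) : s i ∈ Submodule.span A (insert 1 (Set.range s)) :=
    Submodule.subset_span (Set.mem_insert_of_mem _ ⟨i, rfl⟩)
  -- `s i * s (j + 1) = s (i + 1) * s j + aᵢ s (j + 1) - aⱼ s (i + 1)` moves the index to the left
  -- factor until it reaches `s 0 = g(x) = 0`.
  have hmul (j : ℕ) : ∀ i, s i * s j ∈ Submodule.span A (insert 1 (Set.range s)) := by
    induction j with
    | zero => intro i; simp [s, hg]
    | succ j ih =>
      intro i
      have key : s i * s (j + 1) =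
          s (i + 1) * s j + g.coeff i • s (j + 1) - g.coeff j • s (i + 1) := by
        simp only [Algebra.smul_def]
        linear_combination
          s (j + 1) * aeval_divX_iterate x g i - s (i + 1) * aeval_divX_iterate x g j
      rw [key]
      exact sub_mem (add_mem (ih _) (Submodule.smul_mem _ _ (hs_mem _)))
        (Submodule.smul_mem _ _ (hs_mem _))
  have hfin : (Set.range s).Finite := by
    refine ((Set.finite_Iic (g.natDegree + 1)).image s).subset ?_
    rintro _ ⟨i, rfl⟩
    by_cases hi : i ≤ g.natDegree + 1
    · exact ⟨i, hi, rfl⟩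
    · refine ⟨g.natDegree + 1, Set.mem_Iic.mpr le_rfl, ?_⟩
      simp only [s, divX_iterate_eq_zero (Nat.lt_succ_self _),
        divX_iterate_eq_zero (by omega : g.natDegree < i)]
  exact isIntegral_of_mul_mem_span hfin (by rintro _ ⟨i, rfl⟩ _ ⟨j, rfl⟩; exact hmul j i) ⟨i, rfl⟩

theorem isIntegral_mul_aeval_divX_iterate (hg : aeval x g = 0) (i : ℕ) :
    IsIntegral A (x * aeval x (divX^[i] g)) := by
  cases i with
  | zero => simp [hg, isIntegral_zero]
  | succ i =>
    rw [eq_sub_of_add_eq' (aeval_divX_iterate x g i).symm]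
    exact (isIntegral_aeval_divX_iterate hg i).sub isIntegral_algebraMap

end Polynomial

end Tails

section Backward

variable {R S : Type*} [CommRing R] [CommRing S] [Algebra R S]

theorem Subalgebra.pow_natDegree_mul_mem {T : Subalgebra R S} {x v : S} {p : T[X]}
    (hp : p.Monic) (hpx : aeval x p = 0) (hv : v ∈ T) (hvx : v * x ∈ T) :
    (v * x) ^ p.natDegree * x ∈ T := by
  set d := p.natDegree
  have hxd : x ^ d = -∑ i ∈ Finset.range d, (p.coeff i : S) * x ^ i := by
    rw [hp.as_sum] at hpx
    simp only [map_add, map_pow, aeval_X, map_sum, map_mul, aeval_C] at hpx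
    exact eq_neg_of_add_eq_zero_left hpx
  have hsum : (v * x) ^ d * x =
      -∑ i ∈ Finset.range d, (p.coeff i : S) * (v ^ (d - 1 - i) * (v * x) ^ (i + 1)) := by
    calc (v * x) ^ d * x = v ^ d * x * x ^ d := by ring
    _ = _ := by
      rw [hxd, mul_neg, Finset.mul_sum]
      refine congrArg _ (Finset.sum_congr rfl fun i hi => ?_)
      have hd : d = d - 1 - i + (i + 1) := by have := Finset.mem_range.mp hi; omega
      conv_lhs => rw [hd]
      ring
  rw [hsum]
  exact neg_mem (sum_mem fun i _ =>
    mul_mem (SetLike.coe_mem _) (mul_mem (pow_mem hv _) (pow_mem hvx _)))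

theorem Subalgebra.mem_of_isIntegral_of_add_mul_eq_one {T : Subalgebra R S} {x u v : S}
    (hx : IsIntegral T x) (hv : v ∈ T) (hux : u * x ∈ T) (hvx : v * x ∈ T)
    (h : u + v * x = 1) : x ∈ T := by
  obtain ⟨p, hp, hpx⟩ := hx
  have hx : x = (v * x) ^ p.natDegree * x +
      u * x * ∑ i ∈ Finset.range p.natDegree, (v * x) ^ i := by
    rw [eq_sub_of_add_eq h]
    linear_combination (-x) * mul_neg_geom_sum (v * x) p.natDegree
  rw [hx]
  exact add_mem (pow_natDegree_mul_mem hp hpx hv hvx)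
    (mul_mem hux (sum_mem fun i _ => pow_mem hvx i))

/-- The ideal `(A :_A x) + (A :_A x) x` of `A`. -/
def Subalgebra.colonAddColonMul (A : Subalgebra R S) (x : S) : Ideal A where
  carrier := {a | ∃ u v : A, (u : S) * x ∈ A ∧ (v : S) * x ∈ A ∧ (a : S) = u + v * x}
  add_mem' := by
    rintro a b ⟨u, v, hu, hv, ha⟩ ⟨u', v', hu', hv', hb⟩
    refine ⟨u + u', v + v', ?_, ?_, ?_⟩
    · simpa [add_mul] using add_mem hu hu'
    · simpa [add_mul] using add_mem hv hv'
    · simp only [Subalgebra.coe_add, ha, hb]; ring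
  zero_mem' := ⟨0, 0, by simp, by simp, by simp⟩
  smul_mem' := by
    rintro c a ⟨u, v, hu, hv, ha⟩
    refine ⟨c * u, c * v, ?_, ?_, ?_⟩
    · simpa [mul_assoc] using mul_mem c.2 hu
    · simpa [mul_assoc] using mul_mem c.2 hv
    · simp only [smul_eq_mul, Subalgebra.coe_mul, ha]; ring

theorem Subalgebra.coeff_mem_colonAddColonMul {A : Subalgebra R S}
    (hA : ∀ y : S, IsIntegral A y → y ∈ A) {x : S} {g : A[X]} (hg : aeval x g = 0) (i : ℕ) :
    g.coeff i ∈ A.colonAddColonMul x := by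
  refine ⟨⟨_, hA _ (isIntegral_aeval_divX_iterate hg i)⟩,
    -⟨_, hA _ (isIntegral_aeval_divX_iterate hg (i + 1))⟩, ?_, ?_, ?_⟩
  · simpa [mul_comm] using hA _ (isIntegral_mul_aeval_divX_iterate hg i)
  · simpa [mul_comm] using neg_mem (hA _ (isIntegral_mul_aeval_divX_iterate hg (i + 1)))
  · rw [NegMemClass.coe_neg, show (g.coeff i : S) = algebraMap A S (g.coeff i) from rfl]
    linear_combination -aeval_divX_iterate x g i

theorem exists_aeval_eq_zero_coeff_notMem {A : Type*} [CommRing A] [Algebra R A] [Algebra A S]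
    [IsScalarTower R A S] {x : S}
    (hx : IsResiduallyAlgebraic R ((Algebra.adjoin A {x}).restrictScalars R))
    (q : Ideal A) [q.IsPrime] : ∃ g : A[X], aeval x g = 0 ∧ ∃ i, g.coeff i ∉ q := by
  by_contra! h
  rw [Algebra.adjoin_singleton_eq_range_aeval] at hx
  set T₁ := (aeval x : A[X] →ₐ[A] S).range.restrictScalars R
  let φ : A[X] →+* T₁ :=
    RingHom.codRestrict (aeval x).toRingHom T₁ fun g => AlgHom.mem_range_self (aeval x) g
  have hφ : Function.Surjective φ := by
    rintro ⟨_, g, rfl⟩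
    exact ⟨g, rfl⟩
  have hker : RingHom.ker φ ≤ RingHom.ker (mapRingHom (Ideal.Quotient.mk q)) := by
    intro g hg
    ext i
    simpa [Ideal.Quotient.eq_zero_iff_mem] using h g (congrArg Subtype.val hg) i
  let ω : T₁ →+* (A ⧸ q)[X] := φ.liftOfSurjective hφ ⟨_, hker⟩
  have hωφ (g : A[X]) : ω (φ g) = g.map (Ideal.Quotient.mk q) :=
    φ.liftOfRightInverse_comp_apply _ _ _ g
  have hωR (r : R) : ω (algebraMap R T₁ r) = C (Ideal.Quotient.mk q (algebraMap R A r)) := by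
    have : algebraMap R T₁ r = φ (C (algebraMap R A r)) :=
      Subtype.ext (by simp [φ, ← IsScalarTower.algebraMap_apply])
    rw [this, hωφ, map_C]
  have hωaeval (g : R[X]) :
      ω (aeval (φ X) g) = g.map ((Ideal.Quotient.mk q).comp (algebraMap R A)) := by
    rw [aeval_def, hom_eval₂, hωφ, map_X,
      show ω.comp (algebraMap R T₁) = C.comp ((Ideal.Quotient.mk q).comp (algebraMap R A)) from
        RingHom.ext hωR]
    rfl
  obtain ⟨g, ⟨i, hi⟩, hg⟩ := isAlgebraic_quotient_mk_iff.mp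
    ((hx (RingHom.ker ω) (RingHom.ker_isPrime ω)).isAlgebraic (Ideal.Quotient.mk _ (φ X)))
  rw [RingHom.mem_ker, hωaeval] at hg
  apply hi
  rw [RingHom.mem_ker, hωR]
  simpa using congrArg (coeff · i) hg

theorem colonAddColonMul_integralClosure_eq_top {x : S}
    (hx : IsResiduallyAlgebraic R
      ((Algebra.adjoin (integralClosure R S) {x}).restrictScalars R)) :
    (integralClosure R S).colonAddColonMul x = ⊤ := by
  by_contra hne
  obtain ⟨q, hq, hle⟩ := Ideal.exists_le_maximal _ hne
  obtain ⟨g, hg, i, hi⟩ := exists_aeval_eq_zero_coeff_notMem hx q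
  exact hi (hle (Subalgebra.coeff_mem_colonAddColonMul (fun y hy => isIntegral_trans y hy) hg i))

theorem isQuasiPruferExtension_of_isResiduallyAlgebraic
    (h : ∀ T : Subalgebra R S, IsResiduallyAlgebraic R T) : IsQuasiPruferExtension R S := by
  intro T hle x hx
  have h1 : 1 ∈ (integralClosure R S).colonAddColonMul x := by
    rw [colonAddColonMul_integralClosure_eq_top (h _)]
    exact Submodule.mem_top
  obtain ⟨u, v, hux, hvx, h1⟩ := h1
  exact Subalgebra.mem_of_isIntegral_of_add_mul_eq_one hx (hle v.2) (hle hux) (hle hvx) h1.symm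

end Backward

theorem isAlgebraic_of_eval_eq_zero_of_isIntegral_coeff {A D : Type*} [CommRing A] [CommRing D]
    [NoZeroDivisors D] [Algebra A D] {f : D[X]} (hf : f ≠ 0) {τ : D} (hτ : f.eval τ = 0)
    (hcoeff : ∀ i, IsIntegral A (f.coeff i)) : IsAlgebraic A τ := by
  obtain ⟨f', rfl⟩ : f ∈ lifts (algebraMap (integralClosure A D) D) :=
    (lifts_iff_coeff_lifts _).mpr fun i => ⟨⟨_, hcoeff i⟩, rfl⟩
  refine IsAlgebraic.restrictScalars_of_isIntegral A ⟨f', fun h => hf (by simp [h]), ?_⟩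
  rwa [aeval_def, ← eval_map]

section Forward

variable {R S : Type*} [CommRing R] [CommRing S] [Algebra R S]

theorem IsQuasiPruferExtension.mem_adjoin_sq (h : IsQuasiPruferExtension R S) (z : S) :
    z ∈ Algebra.adjoin (integralClosure R S) {z ^ 2} := by
  set B := (Algebra.adjoin (integralClosure R S) {z ^ 2}).restrictScalars R
  have hz2 : z ^ 2 ∈ B :=
    (Subalgebra.mem_restrictScalars R).mpr (Algebra.subset_adjoin (Set.mem_singleton _))
  refine h B (fun a ha => Subalgebra.algebraMap_mem _ (⟨a, ha⟩ : integralClosure R S)) z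
    ⟨X ^ 2 - C ⟨z ^ 2, hz2⟩, monic_X_pow_sub_C _ two_ne_zero, ?_⟩
  simp

theorem IsQuasiPruferExtension.isResiduallyAlgebraic (h : IsQuasiPruferExtension R S)
    (T : Subalgebra R S) : IsResiduallyAlgebraic R T := by
  intro Q _
  refine ⟨fun ξ => ?_⟩
  obtain ⟨z, rfl⟩ := Ideal.Quotient.mk_surjective ξ
  obtain ⟨P, hP⟩ : ∃ P, aeval ((z : S) ^ 2) P = z := by
    simpa [Algebra.adjoin_singleton_eq_range_aeval] using h.mem_adjoin_sq z
  set U := Algebra.adjoin T (integralClosure R S : Set S)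
  have : Algebra.IsIntegral T U :=
    Algebra.IsIntegral.adjoin fun s hs => IsIntegral.tower_top (A := T) hs
  obtain ⟨Q', -, _, rfl⟩ := Ideal.exists_ideal_over_prime_of_isIntegral Q (⊥ : Ideal U)
    (Ideal.comap_bot_le_of_injective _ fun a b hab =>
      Subtype.ext (congrArg (Subtype.val : U → S) hab))
  refine isAlgebraic_quotient_mk_comap_of_isAlgebraic ?_
  let ι : integralClosure R S →+* U :=
    (integralClosure R S).val.toRingHom.codRestrict U fun a => Algebra.subset_adjoin a.2
  have hι (a : integralClosure R S) : IsIntegral R (ι a) :=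
    (isIntegral_algHom_iff (U.val.restrictScalars R) Subtype.val_injective).mp a.2
  set F : (integralClosure R S)[X] := X - expand _ 2 P
  have hF1 : F.coeff 1 = 1 := by simp [F, coeff_expand]
  have hFz : eval₂ ι (algebraMap T U z) F = 0 := by
    apply Subtype.val_injective
    change U.val.toRingHom (eval₂ ι _ F) = 0
    rw [hom_eval₂, show U.val.toRingHom.comp ι = algebraMap (integralClosure R S) S from rfl,
      ← aeval_def]
    simp [F, expand_aeval, hP]
  refine isAlgebraic_of_eval_eq_zero_of_isIntegral_coeff
    (f := F.map ((Ideal.Quotient.mk Q').comp ι)) (fun h => ?_) ?_ fun i => ?_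
  · simpa [hF1] using congrArg (coeff · 1) h
  · rw [eval_map, ← hom_eval₂, hFz, map_zero]
  · rw [coeff_map]
    exact ((hι _).map (Ideal.Quotient.mkₐ R Q')).tower_top

end Forward

theorem isQuasiPruferExtension_iff_residually_algebraic_pair_general {R S : Type*} [CommRing R]
    [CommRing S] [Algebra R S] :
    IsQuasiPruferExtension R S ↔
      ∀ T : Subalgebra R S, ∀ Q : Ideal T, Q.IsPrime →
        Algebra.IsAlgebraic (R ⧸ Q.comap (algebraMap R T)) (T ⧸ Q) :=
  ⟨fun h T => h.isResiduallyAlgebraic T, isQuasiPruferExtension_of_isResiduallyAlgebraic⟩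

/-- **Theorem 2.3 (second equivalence).** A ring extension `R ⊆ S` is quasi-Prüfer if and only
if `R ⊆ S` is a residually algebraic pair: for each intermediate ring `T ∈ [R,S]` and each
prime `Q` of `T`, the extension `R/(Q ∩ R) ⊆ T/Q` is algebraic. -/
theorem isQuasiPruferExtension_iff_residually_algebraic_pair {R S : Type*} [CommRing R]
    [CommRing S] [Algebra R S] (hinj : Function.Injective (algebraMap R S)) :
    IsQuasiPruferExtension R S ↔
      ∀ T : Subalgebra R S, ∀ Q : Ideal T, Q.IsPrime →
        Algebra.IsAlgebraic (R ⧸ Q.comap (algebraMap R T)) (T ⧸ Q) :=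
  isQuasiPruferExtension_iff_residually_algebraic_pair_general
end

section
/- Proposition 3.1 (quasi-Prüfer case): A ring extension R ⊆ S is quasi-Prüfer if and only if, for every prime ideal P of R, the extension R_P ⊆ S_P is quasi-Prüfer, where S_P denotes the localization of S at the multiplicative set R ∖ P. -/
/-!
Both directions compare `R`-subalgebras `T` of `S` with their localizations `T_M ⊆ S_M`.
Every `R_M`-subalgebra of `S_M` is the localization of its preimage in `S`, and an element of
`S_M` integral over `T_M` is, up to a denominator from `M`, the image of an element of `S`
integral over `T` (clear denominators first over `T_M`, then in `S_M`); this carries the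
quasi-Prüfer property from `R ⊆ S` to `R_M ⊆ S_M`. Conversely, let `T` contain the integral
closure of `R` and `x ∈ S` be integral over `T`. For every prime `P`, `T_P` contains the integral
closure of `R_P` in `S_P` and the image of `x` is integral over it, hence lies in it. So the
conductor `{r | r • x ∈ T}` is contained in no maximal ideal, and `x ∈ T`.
-/

theorem IsLocalization.exists_isIntegral_smul_eq_algebraMap {A B Aₘ Bₘ : Type*} [CommRing A]
    [CommRing B] [CommRing Aₘ] [CommRing Bₘ] [Algebra A B] (N : Submonoid A)
    [Algebra A Aₘ] [IsLocalization N Aₘ] [Algebra B Bₘ] [Algebra A Bₘ] [Algebra Aₘ Bₘ]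
    [IsScalarTower A B Bₘ] [IsScalarTower A Aₘ Bₘ]
    [IsLocalization (Algebra.algebraMapSubmonoid B N) Bₘ] {y : Bₘ} (hy : IsIntegral Aₘ y) :
    ∃ n ∈ N, ∃ b : B, IsIntegral A b ∧ n • y = algebraMap B Bₘ b := by
  obtain ⟨⟨n₁, hn₁⟩, hn₁y⟩ := hy.exists_multiple_integral_of_isLocalization N
  obtain ⟨⟨b, _, n₂, hn₂, rfl⟩, hb⟩ :=
    IsLocalization.surj (Algebra.algebraMapSubmonoid B N) (n₁ • y)
  dsimp only at hb
  rw [← IsScalarTower.algebraMap_apply, mul_comm, ← Algebra.smul_def, smul_smul] at hb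
  obtain ⟨n₃, hn₃, hb₃⟩ := IsLocalization.exists_isIntegral_smul_of_isIntegral_map N
    (hb ▸ smul_smul n₂ n₁ y ▸ hn₁y.smul n₂ : IsIntegral A (algebraMap B Bₘ b))
  refine ⟨n₃ * (n₂ * n₁), mul_mem hn₃ (mul_mem hn₂ hn₁), n₃ • b, hb₃, ?_⟩
  rw [mul_smul, hb]
  exact (map_smul (IsScalarTower.toAlgHom A B Bₘ) n₃ b).symm

theorem Submodule.mem_of_forall_exists_smul_mem {R M : Type*} [CommRing R] [AddCommGroup M]
    [Module R M] (N : Submodule R M) (x : M)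
    (h : ∀ (P : Ideal R) [P.IsMaximal], ∃ r ∉ P, r • x ∈ N) : x ∈ N := by
  let I : Ideal R := N.comap (LinearMap.toSpanSingleton R M x)
  suffices I = ⊤ by simpa [I] using I.eq_top_iff_one.mp this
  by_contra hI
  obtain ⟨P, hP, hIP⟩ := I.exists_le_maximal hI
  obtain ⟨r, hrP, hr⟩ := h P
  exact hrP (hIP hr)

namespace Subalgebra

variable {R S : Type*} [CommRing R] [CommRing S] [Algebra R S] (M : Submonoid R)
  (Rₘ Sₘ : Type*) [CommRing Rₘ] [CommRing Sₘ] [Algebra R Rₘ] [IsLocalization M Rₘ]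
  [Algebra S Sₘ] [Algebra R Sₘ] [Algebra Rₘ Sₘ] [IsScalarTower R S Sₘ] [IsScalarTower R Rₘ Sₘ]

def localization (T : Subalgebra R S) : Subalgebra Rₘ Sₘ where
  carrier := {y | ∃ m ∈ M, m • y ∈ T.map (IsScalarTower.toAlgHom R S Sₘ)}
  mul_mem' := by
    rintro y₁ y₂ ⟨m₁, hm₁, h₁⟩ ⟨m₂, hm₂, h₂⟩
    exact ⟨m₁ * m₂, mul_mem hm₁ hm₂, smul_mul_smul_comm m₁ y₁ m₂ y₂ ▸ mul_mem h₁ h₂⟩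
  add_mem' := by
    rintro y₁ y₂ ⟨m₁, hm₁, h₁⟩ ⟨m₂, hm₂, h₂⟩
    refine ⟨m₂ * m₁, mul_mem hm₂ hm₁, ?_⟩
    rw [smul_add, mul_smul, mul_comm, mul_smul]
    exact add_mem (smul_mem _ h₁ m₂) (smul_mem _ h₂ m₁)
  algebraMap_mem' ρ := by
    obtain ⟨a, m, rfl⟩ := IsLocalization.exists_mk'_eq M ρ
    refine ⟨m, m.2, ?_⟩
    rw [← IsScalarTower.algebraMap_smul Rₘ, Algebra.smul_def, ← map_mul,
      IsLocalization.mk'_spec', ← IsScalarTower.algebraMap_apply]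
    exact algebraMap_mem _ a

variable {M Rₘ Sₘ}

theorem mem_localization {T : Subalgebra R S} {y : Sₘ} :
    y ∈ T.localization M Rₘ Sₘ ↔ ∃ m ∈ M, ∃ t ∈ T, algebraMap S Sₘ t = m • y := by
  simp [localization]

variable (M Rₘ Sₘ) in
instance (T : Subalgebra R S) : Algebra T (T.localization M Rₘ Sₘ) :=
  RingHom.toAlgebra <| ((algebraMap S Sₘ).comp T.val.toRingHom).codRestrict
    (T.localization M Rₘ Sₘ) fun t => mem_localization.2 ⟨1, one_mem M, t, t.2, (one_smul R _).symm⟩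

instance (T : Subalgebra R S) : IsScalarTower T (T.localization M Rₘ Sₘ) Sₘ :=
  .of_algebraMap_eq fun _ => rfl

theorem isIntegral_algebraMap_localization {T : Subalgebra R S} {s : S} (hs : IsIntegral T s) :
    IsIntegral (T.localization M Rₘ Sₘ) (algebraMap S Sₘ s) :=
  (hs.map (IsScalarTower.toAlgHom T S Sₘ)).tower_top

variable [IsLocalization (Algebra.algebraMapSubmonoid S M) Sₘ]

instance (T : Subalgebra R S) :
    IsLocalization (Algebra.algebraMapSubmonoid T M) (T.localization M Rₘ Sₘ) where
  map_units := by
    rintro ⟨_, m, hm, rfl⟩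
    have : algebraMap T (T.localization M Rₘ Sₘ) (algebraMap R T m) =
        algebraMap Rₘ _ (algebraMap R Rₘ m) := Subtype.ext <| by
      change algebraMap S Sₘ (algebraMap R S m) = algebraMap Rₘ Sₘ (algebraMap R Rₘ m)
      rw [← IsScalarTower.algebraMap_apply, ← IsScalarTower.algebraMap_apply]
    rw [this]
    exact (IsLocalization.map_units Rₘ ⟨m, hm⟩).map _
  surj := by
    rintro ⟨y, hy⟩
    obtain ⟨m, hm, t, ht, e⟩ := mem_localization.1 hy
    refine ⟨(⟨t, ht⟩, ⟨algebraMap R T m, m, hm, rfl⟩), Subtype.ext ?_⟩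
    change y * algebraMap S Sₘ (algebraMap R S m) = algebraMap S Sₘ t
    rw [e, ← IsScalarTower.algebraMap_apply, mul_comm, Algebra.smul_def]
  exists_of_eq {t₁ t₂} h := by
    obtain ⟨⟨_, m, hm, rfl⟩, e⟩ := IsLocalization.exists_of_eq
      (M := Algebra.algebraMapSubmonoid S M) (congrArg Subtype.val h)
    exact ⟨⟨algebraMap R T m, m, hm, rfl⟩, Subtype.ext e⟩

theorem localization_comap (T' : Subalgebra Rₘ Sₘ) :
    ((T'.restrictScalars R).comap (IsScalarTower.toAlgHom R S Sₘ)).localization M Rₘ Sₘ = T' := by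
  ext y
  rw [mem_localization]
  constructor
  · rintro ⟨m, hm, t, ht, e⟩
    have : m • y ∈ T' := e ▸ ht
    exact (IsLocalization.smul_mem_iff (s := ⟨m, hm⟩) (N' := Subalgebra.toSubmodule T')).1 this
  · intro hy
    obtain ⟨⟨s, _, m, hm, rfl⟩, e⟩ := IsLocalization.surj (Algebra.algebraMapSubmonoid S M) y
    have e' : algebraMap S Sₘ s = m • y := by
      rw [← e, mul_comm, Algebra.smul_def, IsScalarTower.algebraMap_apply R S Sₘ]
    exact ⟨m, hm, s, show algebraMap S Sₘ s ∈ T' from e' ▸ (T'.restrictScalars R).smul_mem hy m, e'⟩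

theorem exists_isIntegral_smul_eq_algebraMap {T : Subalgebra R S} {y : Sₘ}
    (hy : IsIntegral (T.localization M Rₘ Sₘ) y) :
    ∃ m ∈ M, ∃ s : S, IsIntegral T s ∧ m • y = algebraMap S Sₘ s := by
  have : IsLocalization (Algebra.algebraMapSubmonoid S (Algebra.algebraMapSubmonoid T M)) Sₘ := by
    rwa [Algebra.algebraMapSubmonoid_map_map]
  obtain ⟨_, ⟨m, hm, rfl⟩, s, hs, e⟩ :=
    IsLocalization.exists_isIntegral_smul_eq_algebraMap (B := S)
      (Algebra.algebraMapSubmonoid T M) hy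
  exact ⟨m, hm, s, hs, by rwa [algebraMap_smul] at e⟩

theorem integralClosure_le_localization {T : Subalgebra R S} (hT : integralClosure R S ≤ T) :
    integralClosure Rₘ Sₘ ≤ T.localization M Rₘ Sₘ := fun y hy => by
  obtain ⟨m, hm, s, hs, e⟩ := IsLocalization.exists_isIntegral_smul_eq_algebraMap (B := S) M hy
  exact mem_localization.2 ⟨m, hm, s, hT hs, e.symm⟩

theorem exists_smul_mem_of_algebraMap_mem_localization {T : Subalgebra R S} {s : S}
    (hs : algebraMap S Sₘ s ∈ T.localization M Rₘ Sₘ) : ∃ m ∈ M, m • s ∈ T := by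
  obtain ⟨m, hm, t, ht, e⟩ := mem_localization.1 hs
  have e' : algebraMap S Sₘ t = algebraMap S Sₘ (m • s) :=
    e.trans (map_smul (IsScalarTower.toAlgHom R S Sₘ) m s).symm
  obtain ⟨⟨_, m', hm', rfl⟩, hc⟩ :=
    IsLocalization.exists_of_eq (M := Algebra.algebraMapSubmonoid S M) e'
  refine ⟨m' * m, mul_mem hm' hm, ?_⟩
  rw [mul_smul, Algebra.smul_def m', ← hc]
  exact mul_mem (T.algebraMap_mem m') ht

end Subalgebra

namespace IsQuasiPruferExtension

open Subalgebra

variable {R S Rₘ Sₘ : Type*} [CommRing R] [CommRing S] [CommRing Rₘ] [CommRing Sₘ] [Algebra R S]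
  [Algebra R Rₘ] [Algebra S Sₘ] [Algebra R Sₘ] [Algebra Rₘ Sₘ] [IsScalarTower R S Sₘ]
  [IsScalarTower R Rₘ Sₘ]

theorem localization (M : Submonoid R) [IsLocalization M Rₘ]
    [IsLocalization (Algebra.algebraMapSubmonoid S M) Sₘ] (H : IsQuasiPruferExtension R S) :
    IsQuasiPruferExtension Rₘ Sₘ := by
  intro T' hT' x hx
  set T := (T'.restrictScalars R).comap (IsScalarTower.toAlgHom R S Sₘ)
  have hT : integralClosure R S ≤ T := fun s hs =>
    hT' (hs.map (IsScalarTower.toAlgHom R S Sₘ)).tower_top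
  have hT'_eq : T.localization M Rₘ Sₘ = T' := localization_comap T'
  rw [← hT'_eq] at hx ⊢
  obtain ⟨m, hm, s, hs, e⟩ := exists_isIntegral_smul_eq_algebraMap hx
  exact mem_localization.2 ⟨m, hm, s, H T hT s hs, e.symm⟩

theorem exists_smul_mem_of_isIntegral (M : Submonoid R) [IsLocalization M Rₘ]
    [IsLocalization (Algebra.algebraMapSubmonoid S M) Sₘ] (H : IsQuasiPruferExtension Rₘ Sₘ)
    {T : Subalgebra R S} (hT : integralClosure R S ≤ T) {x : S} (hx : IsIntegral T x) :
    ∃ m ∈ M, m • x ∈ T :=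
  exists_smul_mem_of_algebraMap_mem_localization <|
    H _ (integralClosure_le_localization hT) _ (isIntegral_algebraMap_localization (M := M) hx)

end IsQuasiPruferExtension

theorem isQuasiPruferExtension_iff_localizations_general {R S : Type*} [CommRing R] [CommRing S]
    [Algebra R S] :
    IsQuasiPruferExtension R S ↔
      ∀ (P : Ideal R) [P.IsPrime],
        letI : Algebra (Localization.AtPrime P)
            (Localization (P.primeCompl.map (algebraMap R S))) :=
          (IsLocalization.map (Localization (P.primeCompl.map (algebraMap R S)))
            (algebraMap R S) P.primeCompl.le_comap_map :
              Localization.AtPrime P →+* _).toAlgebra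
        IsQuasiPruferExtension (Localization.AtPrime P)
          (Localization (P.primeCompl.map (algebraMap R S))) := by
  constructor
  · intro H P _
    exact (H.localization P.primeCompl : IsQuasiPruferExtension (Localization.AtPrime P)
      (Localization (Algebra.algebraMapSubmonoid S P.primeCompl)))
  · intro H T hT x hx
    refine T.toSubmodule.mem_of_forall_exists_smul_mem x fun P _ => ?_
    have hP : IsQuasiPruferExtension (Localization.AtPrime P)
      (Localization (Algebra.algebraMapSubmonoid S P.primeCompl)) := H P
    exact hP.exists_smul_mem_of_isIntegral P.primeCompl hT hx

/-- **Proposition 3.1 (quasi-Prüfer case).** `R ⊆ S` is quasi-Prüfer iff for every prime `P`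
of `R`, the extension `R_P ⊆ S_P` is quasi-Prüfer, where `S_P` is the localization of `S`
at the multiplicative set `R ∖ P`. -/
theorem isQuasiPruferExtension_iff_localizations {R S : Type*} [CommRing R] [CommRing S]
    [Algebra R S] (hinj : Function.Injective (algebraMap R S)) :
    IsQuasiPruferExtension R S ↔
      ∀ (P : Ideal R) [P.IsPrime],
        letI : Algebra (Localization.AtPrime P)
            (Localization (P.primeCompl.map (algebraMap R S))) :=
          (IsLocalization.map (Localization (P.primeCompl.map (algebraMap R S)))
            (algebraMap R S) P.primeCompl.le_comap_map :
              Localization.AtPrime P →+* _).toAlgebra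
        IsQuasiPruferExtension (Localization.AtPrime P)
          (Localization (P.primeCompl.map (algebraMap R S))) :=
  isQuasiPruferExtension_iff_localizations_general
end

section
/- Lemma 3.7 (quotient part): Let R ⊆ S be a Prüfer (respectively quasi-Prüfer) ring extension, let J be an ideal of S, and set I = J ∩ R. Then the induced extension R/I ⊆ S/J (the induced map R/I → S/J is injective since I = J ∩ R) is Prüfer (respectively quasi-Prüfer). -/
/-!
An intermediate ring `T` of `R/I ⊆ S/J` pulls back to an intermediate ring of `R ⊆ S` that
contains `J`. A monic equation of `x ∈ S/J` over `T` lifts to a monic polynomial over the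
pullback whose value at a lift of `x` lies in `J`, hence in the pullback; correcting its constant
term gives an integral equation of the lift, so closedness of the pullback forces `x ∈ T`.
Integral closures map into integral closures, which handles the quasi-Prüfer case.
-/

open Polynomial

theorem isIntegral_of_monic_of_aeval_mem {A S : Type*} [CommRing A] [CommRing S] [Algebra A S]
    {J : Ideal S} (hJ : (J : Set S) ⊆ Set.range (algebraMap A S)) {s : S} {q : A[X]}
    (hq : q.Monic) (hqs : aeval s q ∈ J) : IsIntegral A s := by
  nontriviality A
  -- `q * X` rather than `q`: its degree is positive even when `q = 1`.
  obtain ⟨a, ha⟩ := hJ (J.mul_mem_right s hqs)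
  refine ⟨q * X - C a, (hq.mul monic_X).sub_of_left ?_, ?_⟩
  · rw [degree_mul_X, degree_eq_natDegree hq.ne_zero]
    exact degree_C_lt.trans_le (by exact_mod_cast le_add_self)
  · rw [← aeval_def, map_sub, map_mul, aeval_X, aeval_C, ha, sub_self]

theorem exists_monic_aeval_mem_of_isIntegral_mk {S A B : Type*} [CommRing S] [CommRing A]
    [CommRing B] [Algebra A S] {J : Ideal S} [Algebra B (S ⧸ J)] {φ : A →+* B}
    (hφ : Function.Surjective φ)
    (hcomm : (algebraMap B (S ⧸ J)).comp φ = (Ideal.Quotient.mk J).comp (algebraMap A S))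
    {s : S} (hs : IsIntegral B (Ideal.Quotient.mk J s)) :
    ∃ q : A[X], q.Monic ∧ aeval s q ∈ J := by
  obtain ⟨p, hp, hps⟩ := hs
  obtain ⟨q, rfl, -, hq⟩ :=
    lifts_and_natDegree_eq_and_monic (lifts_iff_coeff_lifts p |>.2 fun _ ↦ hφ _) hp
  refine ⟨q, hq, Ideal.Quotient.eq_zero_iff_mem.1 ?_⟩
  rwa [aeval_def, hom_eval₂, ← hcomm, ← eval₂_map]

namespace Subalgebra

variable {R S : Type*} [CommRing R] [CommRing S] [Algebra R S] {J : Ideal S}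

def comapQuotientMk (T : Subalgebra (R ⧸ J.comap (algebraMap R S)) (S ⧸ J)) :
    Subalgebra R S :=
  (T.restrictScalars R).comap (Ideal.Quotient.mkₐ R J)

variable {T : Subalgebra (R ⧸ J.comap (algebraMap R S)) (S ⧸ J)}

theorem mem_comapQuotientMk {s : S} : s ∈ T.comapQuotientMk ↔ Ideal.Quotient.mk J s ∈ T :=
  Iff.rfl

theorem ideal_subset_comapQuotientMk : (J : Set S) ⊆ T.comapQuotientMk := fun j hj ↦ by
  rw [SetLike.mem_coe, mem_comapQuotientMk, Ideal.Quotient.eq_zero_iff_mem.2 hj]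
  exact T.zero_mem

theorem isIntegral_comapQuotientMk {s : S} (hs : IsIntegral T (Ideal.Quotient.mk J s)) :
    IsIntegral T.comapQuotientMk s := by
  let φ : T.comapQuotientMk →+* T :=
    ((Ideal.Quotient.mk J).comp (algebraMap T.comapQuotientMk S)).codRestrict T fun t ↦ t.2
  have hφ : Function.Surjective φ := by
    rintro ⟨y, hy⟩
    obtain ⟨s, rfl⟩ := Ideal.Quotient.mk_surjective y
    exact ⟨⟨s, hy⟩, rfl⟩
  obtain ⟨q, hq, hqs⟩ := exists_monic_aeval_mem_of_isIntegral_mk hφ rfl hs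
  exact isIntegral_of_monic_of_aeval_mem
    (fun j hj ↦ ⟨⟨j, ideal_subset_comapQuotientMk hj⟩, rfl⟩) hq hqs

theorem integralClosure_le_comapQuotientMk
    (hT : integralClosure (R ⧸ J.comap (algebraMap R S)) (S ⧸ J) ≤ T) :
    integralClosure R S ≤ T.comapQuotientMk :=
  fun _ hs ↦ hT ((hs.map (Ideal.Quotient.mkₐ R J)).tower_top)

end Subalgebra

section

variable {R S : Type*} [CommRing R] [CommRing S] [Algebra R S]

theorem IsPruferExtension.quotient (h : IsPruferExtension R S) (J : Ideal S) :
    IsPruferExtension (R ⧸ J.comap (algebraMap R S)) (S ⧸ J) := by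
  intro T x hx
  obtain ⟨s, rfl⟩ := Ideal.Quotient.mk_surjective x
  exact h _ s (Subalgebra.isIntegral_comapQuotientMk hx)

theorem IsQuasiPruferExtension.quotient (h : IsQuasiPruferExtension R S) (J : Ideal S) :
    IsQuasiPruferExtension (R ⧸ J.comap (algebraMap R S)) (S ⧸ J) := by
  intro T hT x hx
  obtain ⟨s, rfl⟩ := Ideal.Quotient.mk_surjective x
  exact h _ (Subalgebra.integralClosure_le_comapQuotientMk hT) s
    (Subalgebra.isIntegral_comapQuotientMk hx)

end

theorem isPruferExtension_quotient_and_isQuasiPruferExtension_quotient_general {R S : Type*}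
    [CommRing R] [CommRing S] [Algebra R S]
    (J : Ideal S) :
    (IsPruferExtension R S →
      IsPruferExtension (R ⧸ J.comap (algebraMap R S)) (S ⧸ J)) ∧
    (IsQuasiPruferExtension R S →
      IsQuasiPruferExtension (R ⧸ J.comap (algebraMap R S)) (S ⧸ J)) :=
  ⟨fun h ↦ h.quotient J, fun h ↦ h.quotient J⟩

/-- **Lemma 3.7 (quotient part).** If `R ⊆ S` is Prüfer (resp. quasi-Prüfer), `J` an ideal of
`S` and `I = J ∩ R`, then the induced extension `R/I ⊆ S/J` is Prüfer (resp. quasi-Prüfer). -/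
theorem isPruferExtension_quotient_and_isQuasiPruferExtension_quotient {R S : Type*}
    [CommRing R] [CommRing S] [Algebra R S] (hinj : Function.Injective (algebraMap R S))
    (J : Ideal S) :
    (IsPruferExtension R S →
      IsPruferExtension (R ⧸ J.comap (algebraMap R S)) (S ⧸ J)) ∧
    (IsQuasiPruferExtension R S →
      IsQuasiPruferExtension (R ⧸ J.comap (algebraMap R S)) (S ⧸ J)) :=
  isPruferExtension_quotient_and_isQuasiPruferExtension_quotient_general J
end

section
/- Remark 3.9 (integrality is a residual property): A ring extension R ⊆ S is integral if and only if for every prime ideal Q of S, setting P = Q ∩ R, the extension R/P ⊆ S/Q is integral. -/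
/-- **Remark 3.9.** A ring extension `R ⊆ S` is integral if and only if for every prime ideal
`Q` of `S`, with `P = Q ∩ R`, the extension `R/P ⊆ S/Q` is integral. -/
theorem isIntegral_iff_residually_integral {R S : Type*} [CommRing R] [CommRing S]
    [Algebra R S] (hinj : Function.Injective (algebraMap R S)) :
    Algebra.IsIntegral R S ↔
      ∀ Q : Ideal S, Q.IsPrime →
        Algebra.IsIntegral (R ⧸ Q.comap (algebraMap R S)) (S ⧸ Q) := by
  constructor
  · intro h Q hQ
    constructor
    intro y
    obtain ⟨x, rfl⟩ := Ideal.Quotient.mk_surjective y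
    obtain ⟨f, hf, hfx⟩ := h.isIntegral x
    refine ⟨f.map (Ideal.Quotient.mk (Q.comap (algebraMap R S))), hf.map _, ?_⟩
    have : Polynomial.eval₂ (algebraMap (R ⧸ Q.comap (algebraMap R S)) (S ⧸ Q))
        (Ideal.Quotient.mk Q x) (f.map (Ideal.Quotient.mk (Q.comap (algebraMap R S))))
        = Ideal.Quotient.mk Q (Polynomial.eval₂ (algebraMap R S) x f) := by
      rw [Polynomial.eval₂_map]
      exact (Polynomial.hom_eval₂ f (algebraMap R S) (Ideal.Quotient.mk Q) x).symm
    rw [this, hfx, map_zero]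
  · intro h
    constructor
    intro x
    -- multiplicative set of values of monic polynomials at x
    let M : Submonoid S :=
      { carrier := { s | ∃ f : Polynomial R, f.Monic ∧ Polynomial.aeval x f = s }
        mul_mem' := by
          rintro a b ⟨f, hf, rfl⟩ ⟨g, hg, rfl⟩
          exact ⟨f * g, hf.mul hg, by simp⟩
        one_mem' := ⟨1, Polynomial.monic_one, by simp⟩ }
    by_cases h0 : (0 : S) ∈ M
    · obtain ⟨f, hf, hfx⟩ := h0
      exact ⟨f, hf, hfx⟩
    · exfalso
      have hdisj : Disjoint ((⊥ : Ideal S) : Set S) (M : Set S) := by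
        rw [Set.disjoint_left]
        rintro s hs hsM
        simp only [Ideal.mem_bot, SetLike.mem_coe] at hs
        exact h0 (hs ▸ hsM)
      obtain ⟨Q, hQ, -, hQdisj⟩ := Ideal.exists_le_prime_disjoint (⊥ : Ideal S) M hdisj
      haveI := hQ
      have hint := (h Q hQ).isIntegral (Ideal.Quotient.mk Q x)
      obtain ⟨g, hg, hgx⟩ := hint
      haveI : Nontrivial (R ⧸ Q.comap (algebraMap R S)) := by
        refine Ideal.Quotient.nontrivial_iff.mpr ?_
        intro htop
        have : (1 : R) ∈ Q.comap (algebraMap R S) := htop ▸ Submodule.mem_top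
        simp only [Ideal.mem_comap, map_one] at this
        exact hQ.ne_top (Ideal.eq_top_of_isUnit_mem Q this isUnit_one)
      have hsurj : Function.Surjective (Ideal.Quotient.mk (Q.comap (algebraMap R S))) :=
        Ideal.Quotient.mk_surjective
      have hlift : g ∈ Polynomial.lifts
          (Ideal.Quotient.mk (Q.comap (algebraMap R S)) : R →+* R ⧸ Q.comap (algebraMap R S)) := by
        rw [Polynomial.lifts_iff_coeff_lifts]
        exact fun n => hsurj _
      obtain ⟨f, hfmap, -, hfmonic⟩ := Polynomial.lifts_and_degree_eq_and_monic hlift hg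
      have hmem : Polynomial.aeval x f ∈ M := ⟨f, hfmonic, rfl⟩
      have hQmem : Polynomial.aeval x f ∈ Q := by
        rw [← Ideal.Quotient.eq_zero_iff_mem]
        have : Ideal.Quotient.mk Q (Polynomial.aeval x f)
            = Polynomial.aeval (Ideal.Quotient.mk Q x) g := by
          rw [← hfmap]
          simp only [Polynomial.aeval_def, Polynomial.eval₂_map]
          rw [Polynomial.hom_eval₂ f (algebraMap R S) (Ideal.Quotient.mk Q) x]
          rfl
        rw [this]
        exact hgx
      exact Set.disjoint_left.mp hQdisj hQmem hmem
end

section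
/- Proposition 3.10: Let R ⊆ S be a Prüfer (respectively quasi-Prüfer) ring extension and let R → T be a flat epimorphism of commutative rings. Then the canonical map T → S ⊗_R T is injective and the extension T ⊆ S ⊗_R T is Prüfer (respectively quasi-Prüfer). -/
open TensorProduct Polynomial

section AuxPrufer

variable {R S T : Type*} [CommRing R] [CommRing S] [CommRing T]
  [Algebra R S] [Algebra R T]

/-- If `T` is flat over `R` and `a ⊗ w = 0` in `T ⊗ N`, then `a` lies in the extension to `T`
of the annihilator of `w`. -/
lemma PruferAux.flat_ann [Module.Flat R T] {N : Type*} [AddCommGroup N] [Module R N]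
    (w : N) (a : T) (h : a ⊗ₜ[R] w = (0 : T ⊗[R] N)) :
    a ∈ Ideal.map (algebraMap R T)
      (LinearMap.ker (LinearMap.toSpanSingleton R N w)) := by
  set f := LinearMap.toSpanSingleton R N w with hf
  have hexact : Function.Exact (LinearMap.ker f).subtype f := LinearMap.exact_subtype_ker_map f
  have ht := Module.Flat.lTensor_exact T hexact
  have h0 : (f.lTensor T) (a ⊗ₜ[R] (1 : R)) = 0 := by
    rw [LinearMap.lTensor_tmul]
    simpa [hf, LinearMap.toSpanSingleton_apply] using h
  obtain ⟨y, hy⟩ := (ht _).mp h0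
  have ha : a = TensorProduct.rid R T (((LinearMap.ker f).subtype.lTensor T) y) := by
    rw [hy]; simp
  rw [ha]
  clear ha hy h0 h
  induction y using TensorProduct.induction_on with
  | zero => simp
  | tmul b k =>
      simp only [LinearMap.lTensor_tmul, Submodule.coe_subtype, TensorProduct.rid_tmul]
      rw [Algebra.smul_def]
      exact Ideal.mul_mem_right _ _ (Ideal.mem_map_of_mem _ k.2)
  | add y z ihy ihz =>
      simp only [map_add]
      exact Ideal.add_mem _ ihy ihz

/-- For a flat epimorphism `R → T` and a prime `q` of `T` with contraction `p`, every element
of `T` becomes an element of the image of `R` after multiplication by some `u ∉ p`. -/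
lemma PruferAux.epi_stalk [Module.Flat R T] (hepi : Function.Bijective (LinearMap.mul' R T))
    (q : Ideal T) [hq : q.IsPrime] (t : T) :
    ∃ u : R, u ∉ q.comap (algebraMap R T) ∧ ∃ r : R,
      algebraMap R T u * t = algebraMap R T r := by
  set W : Submodule R T := LinearMap.range (Algebra.linearMap R T) with hW
  have key : t ⊗ₜ[R] (1 : T) = (1 : T) ⊗ₜ[R] t := by
    apply hepi.1
    simp [LinearMap.mul'_apply]
  have h0 : (1 : T) ⊗ₜ[R] (W.mkQ t) = 0 := by
    have h1 := congrArg (LinearMap.lTensor T W.mkQ) key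
    simp only [LinearMap.lTensor_tmul] at h1
    rw [← h1]
    have h2 : W.mkQ 1 = 0 := by
      rw [Submodule.mkQ_apply, Submodule.Quotient.mk_eq_zero]
      exact ⟨1, by simp⟩
    rw [h2, TensorProduct.tmul_zero]
  have hmem := PruferAux.flat_ann (R := R) (T := T) (W.mkQ t) 1 h0
  have hK : ¬ (LinearMap.ker (LinearMap.toSpanSingleton R _ (W.mkQ t))
      ≤ q.comap (algebraMap R T)) := by
    intro hle
    have h3 : Ideal.map (algebraMap R T) _ ≤ q :=
      Ideal.map_le_iff_le_comap.mpr hle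
    exact (Ideal.ne_top_iff_one q).mp hq.ne_top (h3 hmem)
  obtain ⟨u, huK, hup⟩ := SetLike.not_le_iff_exists.mp hK
  refine ⟨u, hup, ?_⟩
  rw [LinearMap.mem_ker, LinearMap.toSpanSingleton_apply, ← map_smul,
    Submodule.mkQ_apply, Submodule.Quotient.mk_eq_zero] at huK
  obtain ⟨r, hr⟩ := huK
  refine ⟨r, ?_⟩
  rw [← Algebra.smul_def]
  simpa using hr.symm

/-- Every element of `T ⊗ S` becomes a "pure" element `1 ⊗ s` after multiplication by
some `u ∉ p`. -/
lemma PruferAux.purify [Module.Flat R T] (hepi : Function.Bijective (LinearMap.mul' R T))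
    (q : Ideal T) [q.IsPrime] (y : T ⊗[R] S) :
    ∃ u : R, u ∉ q.comap (algebraMap R T) ∧ ∃ s : S, u • y = (1 : T) ⊗ₜ[R] s := by
  have hp : (q.comap (algebraMap R T)).IsPrime := Ideal.IsPrime.comap _
  induction y using TensorProduct.induction_on with
  | zero =>
      exact ⟨1, (Ideal.ne_top_iff_one _).mp hp.ne_top, 0, by simp⟩
  | tmul t s =>
      obtain ⟨u, hu, r, hr⟩ := PruferAux.epi_stalk hepi q t
      refine ⟨u, hu, r • s, ?_⟩
      have h1 : u • t = r • (1 : T) := by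
        rw [Algebra.smul_def, hr, Algebra.smul_def, mul_one]
      rw [smul_tmul', h1, smul_tmul]
  | add y z ihy ihz =>
      obtain ⟨u1, hu1, s1, hs1⟩ := ihy
      obtain ⟨u2, hu2, s2, hs2⟩ := ihz
      refine ⟨u1 * u2, fun h => ((hp.mem_or_mem h).elim hu1 hu2), u2 • s1 + u1 • s2, ?_⟩
      have h2 : (u1 * u2) • (y + z) = u2 • (u1 • y) + u1 • (u2 • z) := by
        rw [smul_add, mul_comm u1 u2, mul_smul, mul_smul, smul_comm u1 u2 z]
      rw [h2, hs1, hs2, TensorProduct.tmul_add, TensorProduct.tmul_smul,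
        TensorProduct.tmul_smul]

/-- The key lemma: if `A := {s | 1 ⊗ s ∈ U}` is integrally closed in `S`, then the
intermediate ring `U` of `[T, T ⊗ S]` is integrally closed in `T ⊗ S`. -/
lemma PruferAux.key [Module.Flat R T] (hepi : Function.Bijective (LinearMap.mul' R T))
    (U : Subalgebra T (T ⊗[R] S)) (A : Subalgebra R S)
    (hAU : ∀ s : S, s ∈ A ↔ (1 : T) ⊗ₜ[R] s ∈ U)
    (hA : ∀ y : S, IsIntegral A y → y ∈ A)
    (x : T ⊗[R] S) (hx : IsIntegral U x) : x ∈ U := by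
  rcases subsingleton_or_nontrivial (T ⊗[R] S) with hss | hnt
  · rw [Subsingleton.elim x 0]; exact zero_mem U
  obtain ⟨p, hpm, hpe⟩ := hx
  set n := p.natDegree with hn
  have hn1 : 1 ≤ n := by
    rcases Nat.eq_zero_or_pos n with h0 | h
    · exfalso
      have hp1 : p = 1 := (Polynomial.Monic.natDegree_eq_zero hpm).mp h0
      rw [hp1, Polynomial.eval₂_one] at hpe
      exact one_ne_zero hpe
    · exact h
  set c : ℕ → T ⊗[R] S := fun i => (algebraMap U (T ⊗[R] S)) (p.coeff i) with hc
  have hcU : ∀ i, c i ∈ U := fun i => SetLike.coe_mem (p.coeff i)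
  have hE : x ^ n + ∑ i ∈ Finset.range n, c i * x ^ i = 0 := by
    rw [Polynomial.eval₂_eq_sum_range, Finset.sum_range_succ, hpm.coeff_natDegree,
      map_one, one_mul, add_comm] at hpe
    exact hpe
  set I : Ideal T := Submodule.comap (LinearMap.toSpanSingleton T (T ⊗[R] S) x)
      (Subalgebra.toSubmodule U) with hI
  have hIT : I = ⊤ := by
    by_contra hne
    obtain ⟨q, hqmax, hle⟩ := Ideal.exists_le_maximal I hne
    haveI hqp : q.IsPrime := hqmax.isPrime
    set P := q.comap (algebraMap R T) with hP
    haveI hPp : P.IsPrime := Ideal.IsPrime.comap _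
    have hUsmul : ∀ (u : R) (z : T ⊗[R] S), z ∈ U → u • z ∈ U := by
      intro u z hz
      rw [Algebra.smul_def, IsScalarTower.algebraMap_apply R T (T ⊗[R] S)]
      exact U.mul_mem (U.algebraMap_mem _) hz
    obtain ⟨u₀, hu₀, s₀, hs₀⟩ := PruferAux.purify hepi q x
    have hpick : ∀ i : ℕ, ∃ u : R, u ∉ P ∧ ∃ s : S, u • c i = (1 : T) ⊗ₜ[R] s :=
      fun i => PruferAux.purify hepi q (c i)
    choose uc hucP sc hsc using hpick
    set u' : R := ∏ i ∈ Finset.range n, uc i with hu'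
    have hu'P : u' ∉ P :=
      Finset.prod_induction _ (fun y => y ∉ P)
        (fun a b ha hb h => ((hPp.mem_or_mem h).elim ha hb))
        ((Ideal.ne_top_iff_one _).mp hPp.ne_top) (fun i _ => hucP i)
    set U₀ : R := u₀ * u' with hU₀
    have hU₀P : U₀ ∉ P := fun h => ((hPp.mem_or_mem h).elim hu₀ hu'P)
    set s₁ : S := u' • s₀ with hs₁def
    have hs₁ : U₀ • x = (1 : T) ⊗ₜ[R] s₁ := by
      rw [hU₀, mul_comm, mul_smul, hs₀, hs₁def, TensorProduct.tmul_smul]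
    have hdex : ∀ i : ℕ, ∃ e : S,
        i ∈ Finset.range n → ((1 : T) ⊗ₜ[R] e = U₀ ^ (n - i) • c i ∧ e ∈ A) := by
      intro i
      by_cases hi : i ∈ Finset.range n
      · have hin : i < n := Finset.mem_range.mp hi
        have hdvd : uc i ∣ U₀ ^ (n - i) := by
          have h1 : uc i ∣ u' := Finset.dvd_prod_of_mem _ hi
          have h2 : uc i ∣ U₀ := h1.mul_left u₀
          exact h2.trans (dvd_pow_self U₀ (by omega))
        obtain ⟨g, hg⟩ := hdvd
        refine ⟨g • sc i, fun _ => ⟨?_, ?_⟩⟩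
        · rw [hg, mul_comm, mul_smul, hsc i, TensorProduct.tmul_smul]
        · rw [hAU, TensorProduct.tmul_smul, ← hsc i, ← mul_smul]
          exact hUsmul _ _ (hcU i)
      · exact ⟨0, fun h => absurd h hi⟩
    choose d hdprop using hdex
    have hdc : ∀ i ∈ Finset.range n, (1 : T) ⊗ₜ[R] d i = U₀ ^ (n - i) • c i :=
      fun i hi => (hdprop i hi).1
    have hdA : ∀ i ∈ Finset.range n, d i ∈ A := fun i hi => (hdprop i hi).2
    set w : S := s₁ ^ n + ∑ i ∈ Finset.range n, d i * s₁ ^ i with hw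
    have hw0 : (1 : T) ⊗ₜ[R] w = 0 := by
      have hexp : (1 : T) ⊗ₜ[R] w
          = U₀ ^ n • (x ^ n + ∑ i ∈ Finset.range n, c i * x ^ i) := by
        rw [hw, TensorProduct.tmul_add, TensorProduct.tmul_sum, smul_add, Finset.smul_sum]
        congr 1
        · calc (1 : T) ⊗ₜ[R] (s₁ ^ n) = ((1 : T) ^ n) ⊗ₜ[R] (s₁ ^ n) := by rw [one_pow]
            _ = ((1 : T) ⊗ₜ[R] s₁) ^ n := (Algebra.TensorProduct.tmul_pow 1 s₁ n).symm
            _ = (U₀ • x) ^ n := by rw [hs₁]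
            _ = U₀ ^ n • x ^ n := _root_.smul_pow _ _ _
        · refine Finset.sum_congr rfl fun i hi => ?_
          have hin : i < n := Finset.mem_range.mp hi
          have e1 : ((1 : T) ⊗ₜ[R] d i) * ((1 : T) ⊗ₜ[R] s₁) ^ i
              = (1 : T) ⊗ₜ[R] (d i * s₁ ^ i) := by
            rw [Algebra.TensorProduct.tmul_pow, Algebra.TensorProduct.tmul_mul_tmul,
              one_pow, one_mul]
          calc (1 : T) ⊗ₜ[R] (d i * s₁ ^ i)
              = ((1 : T) ⊗ₜ[R] d i) * ((1 : T) ⊗ₜ[R] s₁) ^ i := e1.symm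
            _ = (U₀ ^ (n - i) • c i) * (U₀ • x) ^ i := by rw [hdc i hi, hs₁]
            _ = (U₀ ^ (n - i) • c i) * (U₀ ^ i • x ^ i) := by rw [_root_.smul_pow]
            _ = (U₀ ^ (n - i) * U₀ ^ i) • (c i * x ^ i) := smul_mul_smul_comm _ _ _ _
            _ = U₀ ^ n • (c i * x ^ i) := by
                rw [← pow_add, Nat.sub_add_cancel (le_of_lt hin)]
      rw [hexp, hE, smul_zero]
    have hmem1 := PruferAux.flat_ann (R := R) (T := T) w 1 hw0
    have hKP : ¬ (LinearMap.ker (LinearMap.toSpanSingleton R S w) ≤ P) := by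
      intro hle2
      have h3 : Ideal.map (algebraMap R T)
          (LinearMap.ker (LinearMap.toSpanSingleton R S w)) ≤ q :=
        Ideal.map_le_iff_le_comap.mpr hle2
      exact (Ideal.ne_top_iff_one q).mp hqp.ne_top (h3 hmem1)
    obtain ⟨r, hrK, hrP⟩ := SetLike.not_le_iff_exists.mp hKP
    have hrw : r • w = 0 := by
      simpa [LinearMap.toSpanSingleton_apply] using hrK
    set D : ℕ → A := fun i => if h : i ∈ Finset.range n
      then ⟨r ^ (n - i) • d i, A.smul_mem (hdA i h) _⟩ else 0 with hD
    set σ : S := r • s₁ with hσ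
    have hint : IsIntegral A σ := by
      refine ⟨X ^ n + ∑ i ∈ Finset.range n, C (D i) * X ^ i, ?_, ?_⟩
      · apply Polynomial.monic_X_pow_add
        apply lt_of_le_of_lt (Polynomial.degree_sum_le _ _)
        rw [Finset.sup_lt_iff (by exact_mod_cast WithBot.bot_lt_coe n)]
        intro i hi
        exact lt_of_le_of_lt (Polynomial.degree_C_mul_X_pow_le i _)
          (by exact_mod_cast Finset.mem_range.mp hi)
      · rw [eval₂_add, eval₂_X_pow, eval₂_finset_sum]
        have hterm : ∀ i ∈ Finset.range n,
            eval₂ (algebraMap A S) σ (C (D i) * X ^ i) = (r ^ (n - i) • d i) * σ ^ i := by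
          intro i hi
          rw [eval₂_mul, eval₂_C, eval₂_X_pow]
          congr 1
          simp only [hD, dif_pos hi]
          rfl
        rw [Finset.sum_congr rfl hterm]
        have hrn : σ ^ n + ∑ i ∈ Finset.range n, (r ^ (n - i) • d i) * σ ^ i = r ^ n • w := by
          rw [hw, smul_add, Finset.smul_sum]
          congr 1
          · rw [hσ, _root_.smul_pow]
          · refine Finset.sum_congr rfl fun i hi => ?_
            have hin : i < n := Finset.mem_range.mp hi
            rw [hσ, _root_.smul_pow, smul_mul_smul_comm, ← pow_add,
              Nat.sub_add_cancel (le_of_lt hin)]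
        rw [hrn]
        have h4 : r ^ n • w = r ^ (n - 1) • (r • w) := by
          rw [smul_smul, ← pow_succ, Nat.sub_add_cancel hn1]
        rw [h4, hrw, smul_zero]
    have hσA : σ ∈ A := hA σ hint
    have hτ : (r * U₀) • x ∈ U := by
      have hσU : (1 : T) ⊗ₜ[R] σ ∈ U := (hAU σ).mp hσA
      rw [hσ, TensorProduct.tmul_smul, ← hs₁, ← mul_smul] at hσU
      exact hσU
    have hτI : algebraMap R T (r * U₀) ∈ I := by
      rw [hI]
      simp only [Submodule.mem_comap, LinearMap.toSpanSingleton_apply,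
        Subalgebra.mem_toSubmodule]
      rw [algebraMap_smul]
      exact hτ
    have hq2 : r * U₀ ∈ P := hle hτI
    exact ((hPp.mem_or_mem hq2).elim hrP hU₀P)
  have h1 : (1 : T) ∈ I := hIT ▸ Submodule.mem_top
  rw [hI] at h1
  simp only [Submodule.mem_comap, LinearMap.toSpanSingleton_apply,
    Subalgebra.mem_toSubmodule, one_smul] at h1
  exact h1

end AuxPrufer

open TensorProduct in
/-- **Proposition 3.10.** Let `R ⊆ S` be Prüfer (resp. quasi-Prüfer) and `R → T` a flat
epimorphism (epimorphism meaning the multiplication map `T ⊗[R] T → T` is bijective). Then the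
canonical map `T → T ⊗[R] S` is injective and `T ⊆ T ⊗[R] S` is Prüfer (resp. quasi-Prüfer). -/
theorem isPruferExtension_baseChange_flat_epi {R S T : Type*} [CommRing R] [CommRing S]
    [CommRing T] [Algebra R S] [Algebra R T]
    (hinj : Function.Injective (algebraMap R S)) [Module.Flat R T]
    (hepi : Function.Bijective (LinearMap.mul' R T)) :
    (IsPruferExtension R S →
      Function.Injective (algebraMap T (T ⊗[R] S)) ∧ IsPruferExtension T (T ⊗[R] S)) ∧
    (IsQuasiPruferExtension R S →
      Function.Injective (algebraMap T (T ⊗[R] S)) ∧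
        IsQuasiPruferExtension T (T ⊗[R] S)) := by
  have hinjT : Function.Injective (algebraMap T (T ⊗[R] S)) := by
    have h1 : Function.Injective ((Algebra.linearMap R S).lTensor T) :=
      Module.Flat.lTensor_preserves_injective_linearMap _ hinj
    intro a b hab
    have h2 : ((Algebra.linearMap R S).lTensor T) (a ⊗ₜ[R] (1 : R))
        = ((Algebra.linearMap R S).lTensor T) (b ⊗ₜ[R] (1 : R)) := by
      simpa [Algebra.TensorProduct.algebraMap_apply] using hab
    have h3 := h1 h2
    have h4 := congrArg (TensorProduct.rid R T) h3
    simpa using h4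
  constructor
  · intro hP
    refine ⟨hinjT, ?_⟩
    intro U x hx
    refine PruferAux.key hepi U
      ((U.restrictScalars R).comap (Algebra.TensorProduct.includeRight)) (fun s => Iff.rfl)
      (fun y hy => hP _ y hy) x hx
  · intro hQ
    refine ⟨hinjT, ?_⟩
    intro U hU x hx
    refine PruferAux.key hepi U
      ((U.restrictScalars R).comap (Algebra.TensorProduct.includeRight)) (fun s => Iff.rfl)
      (fun y hy => hQ _ ?_ y hy) x hx
    intro s hs
    show (1 : T) ⊗ₜ[R] s ∈ U
    refine hU ?_
    have h5 : IsIntegral R ((1 : T) ⊗ₜ[R] s) := by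
      have := IsIntegral.map (Algebra.TensorProduct.includeRight (R := R) (A := T) (B := S))
        (hs : IsIntegral R s)
      simpa using this
    exact h5.tower_top
end

section
/- Proposition 3.13: Let R ⊆ S be a ring extension and let {R_α | α ∈ I} be an upward directed family of elements of [R,S] such that R ⊆ R_α is quasi-Prüfer for each α ∈ I. Then R ⊆ ⋃_{α ∈ I} R_α is quasi-Prüfer. -/
/-- **Proposition 3.13.** Let `{R_α | α ∈ I}` be an upward directed (nonempty) family of
intermediate rings of `R ⊆ S` with each `R ⊆ R_α` quasi-Prüfer. Then `R ⊆ ⋃ R_α` is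
quasi-Prüfer. -/
theorem isQuasiPruferExtension_iSup_of_directed {R S ι : Type*} [CommRing R] [CommRing S]
    [Algebra R S] [Nonempty ι] (hinj : Function.Injective (algebraMap R S))
    (c : ι → Subalgebra R S) (hdir : Directed (· ≤ ·) c)
    (h : ∀ i, IsQuasiPruferExtension R (c i)) :
    IsQuasiPruferExtension R ↥(⨆ i, c i) := by
  classical
  set U : Subalgebra R S := ⨆ i, c i with hU
  intro T hT x hx
  rcases subsingleton_or_nontrivial S with hS | hS
  · have : Subsingleton ↥U := ⟨fun a b => Subtype.ext (Subsingleton.elim _ _)⟩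
    have : x = 0 := Subsingleton.elim _ _
    rw [this]; exact zero_mem T
  -- membership in the directed sup
  have memU : ∀ s : S, s ∈ U → ∃ i, s ∈ c i := by
    intro s hs
    have : s ∈ (↑U : Set S) := hs
    rw [hU, Subalgebra.coe_iSup_of_directed hdir] at this
    exact Set.mem_iUnion.mp this
  obtain ⟨p, pmonic, peval⟩ := hx
  set n := p.natDegree with hn
  -- pick an index containing x and all coefficients of p
  have hcoeff : ∀ j : ℕ, ∃ i, ((p.coeff j : ↥U) : S) ∈ c i := fun j =>
    memU _ (p.coeff j : ↥U).2
  choose k hk using hcoeff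
  obtain ⟨kx, hkx⟩ := memU (x : S) x.2
  obtain ⟨i₀, hi₀⟩ := hdir.finset_le (insert kx ((Finset.range (n + 1)).image k))
  have hxc : (x : S) ∈ c i₀ := hi₀ kx (Finset.mem_insert_self _ _) hkx
  have hcc : ∀ j ≤ n, ((p.coeff j : ↥U) : S) ∈ c i₀ := fun j hj =>
    hi₀ (k j) (Finset.mem_insert_of_mem (Finset.mem_image_of_mem k
      (Finset.mem_range.mpr (Nat.lt_succ_of_le hj)))) (hk j)
  have hle : c i₀ ≤ U := hU ▸ le_iSup c i₀
  set incl : ↥(c i₀) →ₐ[R] ↥U := Subalgebra.inclusion hle with hincl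
  -- the intermediate ring downstairs
  set T' : Subalgebra R ↥(c i₀) := T.comap incl with hT'
  have hT'cl : integralClosure R ↥(c i₀) ≤ T' := by
    intro y hy
    have hy' : IsIntegral R (incl y) := (hy : IsIntegral R y).map incl
    exact hT hy'
  -- the element downstairs
  set x' : ↥(c i₀) := ⟨(x : S), hxc⟩ with hx'
  have hinclx : incl x' = x := Subtype.ext rfl
  -- the ring hom on coefficients
  set g : ↥T' →+* ↥T :=
    { toFun := fun y => ⟨incl y.1, y.2⟩
      map_one' := by ext; rfl
      map_mul' := fun a b => by ext; rfl
      map_zero' := by ext; rfl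
      map_add' := fun a b => by ext; rfl } with hg
  -- p lifts along g
  have hlifts : p ∈ Polynomial.lifts g := by
    rw [Polynomial.lifts_iff_coeff_lifts]
    intro j
    by_cases hj : j ≤ n
    · have hmem : incl ⟨((p.coeff j : ↥U) : S), hcc j hj⟩ = (p.coeff j : ↥U) :=
        Subtype.ext rfl
      have hmem' : incl ⟨((p.coeff j : ↥U) : S), hcc j hj⟩ ∈ T := by
        rw [hmem]; exact (p.coeff j).2
      exact ⟨⟨⟨((p.coeff j : ↥U) : S), hcc j hj⟩, hmem'⟩, Subtype.ext hmem⟩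
    · have : p.coeff j = 0 := p.coeff_eq_zero_of_natDegree_lt (lt_of_not_ge hj)
      exact ⟨0, by rw [map_zero, this]⟩
  have : Nontrivial ↥T := by
    refine ⟨0, 1, fun h01 => ?_⟩
    have : ((0 : ↥T) : ↥U) = ((1 : ↥T) : ↥U) := congrArg _ h01
    have h2 : ((0 : ↥U) : S) = ((1 : ↥U) : S) := congrArg _ this
    simp only [ZeroMemClass.coe_zero, OneMemClass.coe_one] at h2
    exact zero_ne_one h2
  obtain ⟨q, hqmap, _, hqmonic⟩ := Polynomial.lifts_and_degree_eq_and_monic hlifts pmonic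
  -- x' is integral over T'
  have hint : IsIntegral T' x' := by
    refine ⟨q, hqmonic, ?_⟩
    have hcomm : (incl.toRingHom.comp (algebraMap ↥T' ↥(c i₀))) =
        (algebraMap ↥T ↥U).comp g := by
      ext y; rfl
    have key : incl.toRingHom (Polynomial.eval₂ (algebraMap ↥T' ↥(c i₀)) x' q) = 0 := by
      rw [Polynomial.hom_eval₂, hcomm, ← Polynomial.eval₂_map, hqmap]
      have hx2 : incl.toRingHom x' = x := hinclx
      rw [hx2]; exact peval
    apply Subalgebra.inclusion_injective hle
    show incl.toRingHom _ = incl _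
    rw [key, map_zero]
  have hx'T' : x' ∈ T' := h i₀ T' hT'cl x' hint
  have : incl x' ∈ T := hx'T'
  rwa [hinclx] at this
end

section
/- Theorem 4.3 (first part): Every almost-Prüfer ring extension R ⊆ S is quasi-Prüfer. -/
open Polynomial

section Subalgebra

variable {R S : Type*} [CommRing R] [CommRing S] [Algebra R S] (U : Subalgebra R S)

theorem Subalgebra.pow_natDegree_mul_aeval_mem {b x : S} (hb : b ∈ U) (hbx : b * x ∈ U)
    (p : U[X]) : b ^ p.natDegree * aeval x p ∈ U := by
  have h := scaleRoots_eval₂_mul (algebraMap U S) x (⟨b, hb⟩ : U) (p := p)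
  rw [← aeval_def] at h
  have : (algebraMap U S) ⟨b, hb⟩ * x = algebraMap U S ⟨b * x, hbx⟩ := rfl
  rw [this, ← aeval_def, aeval_algebraMap_apply] at h
  exact h ▸ SetLike.coe_mem _

theorem Subalgebra.exists_pow_mul_pow_succ_mem {b x : S} (hb : b ∈ U) (hbx : b * x ∈ U)
    (hx : IsIntegral U x) : ∃ n, b ^ n * x ^ (n + 1) ∈ U := by
  obtain ⟨p, hp, hpx⟩ := hx
  refine ⟨p.natDegree, ?_⟩
  set r := X ^ (p.natDegree + 1) %ₘ p
  have hr : x ^ (p.natDegree + 1) = aeval x r := by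
    rw [aeval_modByMonic_eq_self_of_root hpx, aeval_X_pow]
  rw [hr, ← Nat.sub_add_cancel (natDegree_modByMonic_le _ hp), pow_add, mul_assoc]
  exact U.mul_mem (U.pow_mem hb _) (U.pow_natDegree_mul_aeval_mem hb hbx r)

theorem Subalgebra.mem_of_isIntegral_of_add_mul_eq_one_s17 {a b x : S} (hx : IsIntegral U x)
    (ha : a ∈ U) (hb : b ∈ U) (hax : a * x ∈ U) (hbx : b * x ∈ U) (hab : a + b * x = 1) :
    x ∈ U := by
  obtain ⟨n, hn⟩ := U.exists_pow_mul_pow_succ_mem hb hbx hx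
  have hcop : IsCoprime (⟨a, ha⟩ : U) ⟨b * x, hbx⟩ :=
    ⟨1, 1, Subtype.ext (by simpa using hab)⟩
  obtain ⟨u, v, huv⟩ := hcop.pow_right (n := n)
  have huv' : (u : S) * a + v * (b * x) ^ n = 1 := by simpa using congrArg Subtype.val huv
  have hx : x = u * (a * x) + v * (b ^ n * x ^ (n + 1)) := by
    linear_combination (-x) * huv'
  rw [hx]
  exact add_mem (mul_mem u.2 hax) (mul_mem v.2 hn)

end Subalgebra

section PruferElement

variable (R : Type*) {S : Type*} [CommRing R] [CommRing S] [Algebra R S]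

/-- Locally on `Spec R`, `x` or its inverse comes from `R`: where `a` is a unit, `x = (a x) / a`;
where `a` vanishes, `b x` is a unit and `x⁻¹ = b / (b x)`. -/
def IsPruferElement (x : S) : Prop :=
  ∃ a b : R, algebraMap R S a + algebraMap R S b * x = 1 ∧
    algebraMap R S a * x ∈ (algebraMap R S).range ∧
    algebraMap R S b * x ∈ (algebraMap R S).range

def pruferIdeal (x : S) : Ideal R where
  carrier := {u | ∃ a b : R, algebraMap R S a * x ∈ (algebraMap R S).range ∧
    algebraMap R S b * x ∈ (algebraMap R S).range ∧
    algebraMap R S u = algebraMap R S a + algebraMap R S b * x}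
  add_mem' := by
    rintro u v ⟨a, b, ha, hb, hu⟩ ⟨a', b', ha', hb', hv⟩
    refine ⟨a + a', b + b', ?_, ?_, ?_⟩
    · simpa [add_mul] using add_mem ha ha'
    · simpa [add_mul] using add_mem hb hb'
    · simp only [map_add, hu, hv]; ring
  zero_mem' := ⟨0, 0, by simp, by simp, by simp⟩
  smul_mem' := by
    rintro c u ⟨a, b, ha, hb, hu⟩
    have hc := RingHom.mem_range_self (algebraMap R S) c
    refine ⟨c * a, c * b, ?_, ?_, ?_⟩
    · simpa [mul_assoc] using mul_mem hc ha
    · simpa [mul_assoc] using mul_mem hc hb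
    · simp only [smul_eq_mul, map_mul, hu]; ring

variable {R}

theorem isPruferElement_of_pruferIdeal_eq_top {x : S} (h : pruferIdeal R x = ⊤) :
    IsPruferElement R x := by
  obtain ⟨a, b, ha, hb, hab⟩ : (1 : R) ∈ pruferIdeal R x := h ▸ Submodule.mem_top
  exact ⟨a, b, by rw [← hab, map_one], ha, hb⟩

theorem mem_pruferIdeal_of_eq_coeff_X_sub_C_mul {x : S} {g : S[X]}
    (hg : ∀ k, g.coeff k ∈ (algebraMap R S).range ∧ x * g.coeff k ∈ (algebraMap R S).range)
    {u : R} {j : ℕ} (hu : algebraMap R S u = ((X - C x) * g).coeff j) :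
    u ∈ pruferIdeal R x := by
  cases j with
  | zero =>
    obtain ⟨b, hb⟩ := (hg 0).1
    refine ⟨0, -b, by simp, ?_, ?_⟩
    · simpa [hb, mul_comm] using neg_mem (hg 0).2
    · simp [hu, hb, mul_comm]
  | succ j =>
    obtain ⟨a, ha⟩ := (hg j).1
    obtain ⟨b, hb⟩ := (hg (j + 1)).1
    refine ⟨a, -b, ?_, ?_, ?_⟩
    · simpa [ha, mul_comm] using (hg j).2
    · simpa [hb, mul_comm] using neg_mem (hg (j + 1)).2
    · rw [hu, coeff_X_sub_C_mul, map_neg, ha, hb]; ring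

end PruferElement

section DedekindMertens

variable {R S : Type*} [CommRing R] [CommRing S] [Algebra R S] {x : S} {g : S[X]}

/-- The degree one case of the Dedekind–Mertens lemma. -/
theorem Polynomial.coeff_mul_coeff_mem_span_coeff_of_X_sub_C_mul
    (hg : ∀ k, ((X - C x) * g).coeff k ∈ (algebraMap R S).range) (i j : ℕ) :
    g.coeff i * g.coeff j ∈ Submodule.span R (Set.range g.coeff) := by
  set F := (X - C x) * g with hF
  have hFg : ∀ m k, F.coeff m * g.coeff k ∈ Submodule.span R (Set.range g.coeff) := by
    intro m k
    obtain ⟨r, hr⟩ := hg m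
    rw [← hr, ← Algebra.smul_def]
    exact Submodule.smul_mem _ r (Submodule.subset_span ⟨k, rfl⟩)
  have hF0 : F.coeff 0 = -(x * g.coeff 0) := by simp [hF]
  induction i generalizing j with
  | zero =>
    have : g.coeff 0 * g.coeff j =
        F.coeff (j + 1) * g.coeff 0 - F.coeff 0 * g.coeff (j + 1) := by
      rw [hF0, hF, coeff_X_sub_C_mul]; ring
    rw [this]
    exact sub_mem (hFg _ _) (hFg _ _)
  | succ i ih =>
    have : g.coeff (i + 1) * g.coeff j =
        F.coeff (j + 1) * g.coeff (i + 1) - F.coeff (i + 1) * g.coeff (j + 1) +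
          g.coeff i * g.coeff (j + 1) := by
      rw [hF, coeff_X_sub_C_mul, coeff_X_sub_C_mul]; ring
    rw [this]
    exact add_mem (sub_mem (hFg _ _) (hFg _ _)) (ih (j + 1))

theorem Polynomial.isIntegral_coeff_of_isIntegral_coeff_X_sub_C_mul
    (hg : ∀ k, IsIntegral R (((X - C x) * g).coeff k)) (k : ℕ) :
    IsIntegral R (g.coeff k) ∧ IsIntegral R (x * g.coeff k) := by
  set B := integralClosure R S
  set N : Submodule B S := Submodule.span B (insert 1 (Set.range g.coeff))
  have h1N : (1 : S) ∈ N := Submodule.subset_span (Set.mem_insert _ _)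
  have hgN : ∀ k, g.coeff k ∈ N := fun k =>
    Submodule.subset_span (Set.mem_insert_of_mem _ ⟨k, rfl⟩)
  have hBN : ∀ b : B, (b : S) ∈ N := fun b => by
    simpa [Algebra.smul_def] using N.smul_mem b h1N
  have hmul : ∀ u v, u ∈ N → v ∈ N → u * v ∈ N := by
    suffices N * N ≤ N from fun u v hu hv => this (Submodule.mul_mem_mul hu hv)
    rw [Submodule.span_mul_span, Submodule.span_le]
    rintro _ ⟨u, hu, v, hv, rfl⟩
    rcases hu with rfl | ⟨i, rfl⟩
    · simpa using Submodule.subset_span hv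
    rcases hv with rfl | ⟨j, rfl⟩
    · simpa using hgN i
    refine Submodule.span_mono (Set.subset_insert _ _) ?_
    exact coeff_mul_coeff_mem_span_coeff_of_X_sub_C_mul (fun m => ⟨⟨_, hg m⟩, rfl⟩) i j
  have hint : ∀ y ∈ N, IsIntegral R y := fun y hy =>
    isIntegral_trans y (IsIntegral.of_mem_of_fg (N.toSubalgebra h1N hmul)
      (Submodule.fg_span ((finite_range_coeff g).insert 1)) y hy)
  have hxN : x * g.coeff k ∈ N := by
    cases k with
    | zero =>
      have : x * g.coeff 0 = -((X - C x) * g).coeff 0 := by simp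
      rw [this]
      exact N.neg_mem (hBN ⟨_, hg 0⟩)
    | succ k =>
      have : x * g.coeff (k + 1) = g.coeff k - ((X - C x) * g).coeff (k + 1) := by
        rw [coeff_X_sub_C_mul]; ring
      rw [this]
      exact N.sub_mem (hgN k) (hBN ⟨_, hg _⟩)
  exact ⟨hint _ (hgN k), hint _ hxN⟩

end DedekindMertens

theorem IsPruferExtension.isPruferElement {R T : Type*} [CommRing R] [CommRing T] [Algebra R T]
    (h : IsPruferExtension R T) (t : T) : IsPruferElement R t := by
  have hmem : ∀ y : T, IsIntegral R y → y ∈ (algebraMap R T).range := fun y hy =>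
    Algebra.mem_bot.mp (h ⊥ y hy.tower_top)
  have ht : t ∈ Algebra.adjoin R {t ^ 2} := h _ t <| IsIntegral.of_pow two_pos <|
    isIntegral_algebraMap (x := (⟨t ^ 2, Algebra.self_mem_adjoin_singleton R _⟩ :
      Algebra.adjoin R {t ^ 2}))
  obtain ⟨p, hp : aeval (t ^ 2) p = t⟩ :=
    Algebra.adjoin_singleton_eq_range_aeval R (t ^ 2) ▸ ht
  set f : R[X] := expand R 2 p - X
  have hf1 : f.coeff 1 = -1 := by simp [f, coeff_expand]
  have hft : (f.map (algebraMap R T)).IsRoot t := by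
    simp [f, IsRoot, eval_map, ← aeval_def, expand_aeval, hp]
  set q := f.map (algebraMap R T) /ₘ (X - C t)
  have hq : (X - C t) * q = f.map (algebraMap R T) := mul_divByMonic_eq_iff_isRoot.mpr hft
  have hqint := isIntegral_coeff_of_isIntegral_coeff_X_sub_C_mul (g := q) fun k => by
    rw [hq, coeff_map]; exact isIntegral_algebraMap
  obtain ⟨a, ha⟩ := hmem _ (hqint 0).1
  obtain ⟨b, hb⟩ := hmem _ (hqint 1).1
  have h1 : q.coeff 0 - t * q.coeff 1 = -1 := by
    rw [← zero_add 1, ← coeff_X_sub_C_mul, hq, coeff_map, zero_add, hf1, map_neg, map_one]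
  refine ⟨-a, b, ?_, ?_, ?_⟩
  · rw [map_neg, ha, hb]; linear_combination -h1
  · rw [map_neg, ha, neg_mul, mul_comm]; exact neg_mem (hmem _ (hqint 0).2)
  · rw [hb, mul_comm]; exact hmem _ (hqint 1).2

section Normalizer

variable {R T : Type*} [CommRing R] [CommRing T] [Algebra R T] {P : Ideal R} [P.IsPrime]

/-- Locally at `P`, `s` is the inverse of an element of `L ∪ {1}` that divides all the others. -/
theorem exists_mul_mem_range_of_isPruferElement (hT : ∀ t : T, IsPruferElement R t)
    (hP : RingHom.ker (algebraMap R T) ≤ P) (L : Finset T) :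
    ∃ s : R, (∀ t ∈ L, algebraMap R T s * t ∈ (algebraMap R T).range) ∧
      (s ∉ P ∨ ∃ t ∈ L, ∃ r ∉ P, algebraMap R T r = algebraMap R T s * t) := by
  classical
  induction L using Finset.induction_on with
  | empty => exact ⟨1, by simp, Or.inl (Ideal.one_notMem P)⟩
  | insert t L _ ih =>
    obtain ⟨s, hs, hsP⟩ := ih
    obtain ⟨a, b, hab, ⟨p, hp⟩, ⟨c, hc⟩⟩ := hT (algebraMap R T s * t)
    have hrescale : ∀ e : R,
        algebraMap R T e * (algebraMap R T s * t) ∈ (algebraMap R T).range →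
        ∀ t' ∈ insert t L, algebraMap R T (e * s) * t' ∈ (algebraMap R T).range := by
      intro e he t' ht'
      rw [map_mul, mul_assoc]
      rcases Finset.mem_insert.mp ht' with rfl | ht'
      · exact he
      · exact mul_mem (RingHom.mem_range_self _ e) (hs t' ht')
    by_cases haP : a ∈ P
    · have hcP : c ∉ P := fun hcP => Ideal.one_notMem P <| by
        have : a + c - 1 ∈ P := hP <| by simp [RingHom.mem_ker, hc, hab]
        simpa using P.sub_mem (P.add_mem haP hcP) this
      refine ⟨b * s, hrescale b ⟨c, hc⟩,
        Or.inr ⟨t, Finset.mem_insert_self t L, c, hcP, ?_⟩⟩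
      rw [hc, map_mul, mul_assoc]
    · refine ⟨a * s, hrescale a ⟨p, hp⟩, ?_⟩
      rcases hsP with hsP | ⟨t', ht', r, hrP, hr⟩
      · exact Or.inl (Ideal.IsPrime.mul_notMem ‹_› haP hsP)
      · refine Or.inr ⟨t', Finset.mem_insert_of_mem ht', a * r,
          Ideal.IsPrime.mul_notMem ‹_› haP hrP, ?_⟩
        rw [map_mul, hr, map_mul, mul_assoc]

theorem Polynomial.Monic.exists_mul_coeff_mem_range (hT : ∀ t : T, IsPruferElement R t)
    (hP : RingHom.ker (algebraMap R T) ≤ P) {f : T[X]} (hf : f.Monic) :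
    ∃ s : R, (∀ k, algebraMap R T s * f.coeff k ∈ (algebraMap R T).range) ∧
      ∃ k, ∃ r ∉ P, algebraMap R T r = algebraMap R T s * f.coeff k := by
  obtain ⟨s, hs, hsP⟩ := exists_mul_mem_range_of_isPruferElement hT hP f.coeffs
  refine ⟨s, fun k => ?_, ?_⟩
  · by_cases hk : f.coeff k = 0
    · simp [hk]
    · exact hs _ (coeff_mem_coeffs hk)
  · rcases hsP with hsP | ⟨t, ht, r, hrP, hr⟩
    · exact ⟨f.natDegree, s, hsP, by rw [hf.coeff_natDegree, mul_one]⟩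
    · obtain ⟨k, -, rfl⟩ := mem_coeffs_iff.mp ht
      exact ⟨k, r, hrP, hr⟩

end Normalizer

section IntegralClosure

variable {R S : Type*} [CommRing R] [CommRing S] [Algebra R S] {T : Subalgebra R S}

theorem pruferIdeal_integralClosure_not_le (hT : ∀ t : T, IsPruferElement R t) {x : S}
    (hx : IsIntegral T x) (M : Ideal (integralClosure R S)) [M.IsPrime] :
    ¬ pruferIdeal (integralClosure R S) x ≤ M := by
  obtain ⟨f, hf, hfx⟩ := hx
  have hker : RingHom.ker (algebraMap R T) ≤ M.comap (algebraMap R (integralClosure R S)) := by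
    intro r hr
    have : algebraMap R (integralClosure R S) r = 0 := Subtype.ext <| by
      change algebraMap R S r = 0
      rw [IsScalarTower.algebraMap_apply R T S, RingHom.mem_ker.mp hr, map_zero]
    rw [Ideal.mem_comap, this]
    exact M.zero_mem
  obtain ⟨s, hs, j, r, hrP, hr⟩ := hf.exists_mul_coeff_mem_range hT hker
  set F : S[X] := (C (algebraMap R T s) * f).map (algebraMap T S)
  have hFcoeff : ∀ k, F.coeff k ∈ (algebraMap R S).range := fun k => by
    obtain ⟨q, hq⟩ := hs k
    refine ⟨q, ?_⟩
    rw [coeff_map, IsScalarTower.algebraMap_apply R T S, hq, coeff_C_mul]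
  have hFx : F.IsRoot x := by
    rw [IsRoot, eval_map, eval₂_mul, hfx, mul_zero]
  set g := F /ₘ (X - C x)
  have hg : (X - C x) * g = F := mul_divByMonic_eq_iff_isRoot.mpr hFx
  have hgint := isIntegral_coeff_of_isIntegral_coeff_X_sub_C_mul (g := g) fun k => by
    obtain ⟨q, hq⟩ := hFcoeff k
    rw [hg, ← hq]; exact isIntegral_algebraMap
  intro hle
  refine hrP (hle (mem_pruferIdeal_of_eq_coeff_X_sub_C_mul (g := g) (j := j)
    (fun k => ⟨⟨⟨_, (hgint k).1⟩, rfl⟩, ⟨⟨_, (hgint k).2⟩, rfl⟩⟩) ?_))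
  rw [hg, coeff_map, coeff_C_mul, ← hr, ← IsScalarTower.algebraMap_apply R T S]
  rfl

theorem isPruferElement_integralClosure_of_isIntegral (hT : ∀ t : T, IsPruferElement R t)
    {x : S} (hx : IsIntegral T x) : IsPruferElement (integralClosure R S) x := by
  refine isPruferElement_of_pruferIdeal_eq_top (by_contra fun hne => ?_)
  obtain ⟨M, hM, hle⟩ := Ideal.exists_le_maximal _ hne
  exact pruferIdeal_integralClosure_not_le hT hx M hle

end IntegralClosure

theorem isQuasiPruferExtension_of_almostPrufer_general {R S : Type*} [CommRing R] [CommRing S]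
    [Algebra R S]
    (h : ∃ T : Subalgebra R S, IsPruferExtension R T ∧ Algebra.IsIntegral T S) :
    IsQuasiPruferExtension R S := by
  obtain ⟨T, hPT, hTS⟩ := h
  intro U hU x hx
  obtain ⟨a, b, hab, ⟨a', ha'⟩, ⟨b', hb'⟩⟩ :=
    isPruferElement_integralClosure_of_isIntegral hPT.isPruferElement (hTS.isIntegral x)
  exact U.mem_of_isIntegral_of_add_mul_eq_one_s17 hx (hU a.2) (hU b.2) (ha' ▸ hU a'.2)
    (hb' ▸ hU b'.2) hab

/-- **Theorem 4.3 (first part).** Every almost-Prüfer extension (one factoring as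
`R ⊆ T ⊆ S` with `R ⊆ T` Prüfer and `T ⊆ S` integral) is quasi-Prüfer. -/
theorem isQuasiPruferExtension_of_almostPrufer {R S : Type*} [CommRing R] [CommRing S]
    [Algebra R S] (hinj : Function.Injective (algebraMap R S))
    (h : ∃ T : Subalgebra R S, IsPruferExtension R T ∧ Algebra.IsIntegral T S) :
    IsQuasiPruferExtension R S :=
  isQuasiPruferExtension_of_almostPrufer_general h
end
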